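/- arXiv:1706.06342 — 12 statements merged into one kernel-verified Lean document; each statement's English description precedes it below -/
import Mathlib

section
/- Every M-semiflow is syndetically transitive. That is, if a topological semiflow (T,X) (a topological monoid T acting jointly continuously on a topological space X) is topologically transitive and its almost periodic points are dense in X, then for every pair of nonempty open sets U,V ⊆ X the hitting-time set N_T(U,V) = {t ∈ T : ∃ x ∈ U, t•x ∈ V} is syndetic in T. -/
open Filter Topology Set

/-- A subset `B` of a topological monoid `T` is *syndetic* if there is a compact set
`K ⊆ T` such that `K·t` meets `B` for every `t ∈ T`. -/
def Syndetic {T : Type*} [Monoid T] [TopologicalSpace T] (B : Set T) : Prop :=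
  ∃ K : Set T, IsCompact K ∧ ∀ t : T, ∃ k ∈ K, k * t ∈ B

/-- The hitting-time set `N_T(U,V) = {t ∈ T : ∃ x ∈ U, t • x ∈ V}`. -/
def HittingTimes (T : Type*) {X : Type*} [Monoid T] [MulAction T X] (U V : Set X) : Set T :=
  {t : T | ∃ x ∈ U, t • x ∈ V}

/-- Every M-semiflow is syndetically transitive: if a topological semiflow `(T,X)` is
topologically transitive and its almost periodic points are dense in `X`, then
`N_T(U,V)` is syndetic in `T` for all nonempty open `U, V ⊆ X`. -/
theorem msemiflow_syndetically_transitive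
    {T X : Type*} [Monoid T] [TopologicalSpace T] [ContinuousMul T]
    [TopologicalSpace X] [MulAction T X] [ContinuousSMul T X]
    (htrans : ∀ U V : Set X, IsOpen U → U.Nonempty → IsOpen V → V.Nonempty →
      (HittingTimes T U V).Nonempty)
    (hap : Dense {x : X | ∀ U : Set X, IsOpen U → x ∈ U → Syndetic {t : T | t • x ∈ U}}) :
    ∀ U V : Set X, IsOpen U → U.Nonempty → IsOpen V → V.Nonempty →
      Syndetic (HittingTimes T U V) := by
  intro U V hU hUne hV hVne
  -- transitivity from V to U gives s and y ∈ V with s • y ∈ U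
  obtain ⟨s, y, hyV, hsyU⟩ := htrans V U hV hVne hU hUne
  -- W = V ∩ (s • ·)⁻¹ U is open and nonempty
  set W : Set X := V ∩ (fun p => s • p) ⁻¹' U with hW
  have hWopen : IsOpen W := hV.inter (hU.preimage (continuous_const_smul s))
  have hWne : W.Nonempty := ⟨y, hyV, hsyU⟩
  -- pick an almost periodic point z ∈ W
  obtain ⟨z, hzap, hzW⟩ := hap.exists_mem_open hWopen hWne
  obtain ⟨K, hKc, hK⟩ := hzap W hWopen hzW
  refine ⟨K, hKc, fun t => ?_⟩
  obtain ⟨k, hkK, hk⟩ := hK (t * s)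
  refine ⟨k, hkK, s • z, hzW.2, ?_⟩
  have : (k * (t * s)) • z ∈ V := hk.1
  simpa [mul_smul, mul_assoc] using this
end

section
/- Let (T,X) be a topological semiflow on a uniform space (X,𝓤). If (T,X) is syndetically transitive and is not sensitive to initial conditions, then (T,X) is minimal, i.e., the orbit T•x is dense in X for every x ∈ X. -/
open Filter Topology Set Uniformity

/-!
Non-sensitivity yields, for every entourage `ε`, a nonempty open set `U` whose points stay
`ε`-close along the whole semiflow. Given `x` and a target point `w`, the times sending `U` near
`w` are syndetic with some compact `K`, and by compactness `K` acts equicontinuously at `x`.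
Transitivity gives `s` and `z ∈ U` with `s • z` near `x`, and syndeticity some `k ∈ K` with
`(k * s) • z'` near `w` for a `z' ∈ U`. Then
`w ≈ (k * s) • z' ≈ (k * s) • z = k • (s • z) ≈ k • x`, so the orbit of `x` comes near `w`.
-/

open scoped SetRel

def IsSensitive (T X : Type*) [Monoid T] [UniformSpace X] [MulAction T X] : Prop :=
  ∃ ε ∈ 𝓤 X, ∀ x : X, ∀ V ∈ 𝓝 x, ∃ y ∈ V, ∃ t : T, (t • x, t • y) ∉ ε

section Semiflow

variable {T X : Type*} [Monoid T] [UniformSpace X] [MulAction T X]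

theorem Syndetic.nonempty [TopologicalSpace T] {B : Set T} (hB : Syndetic B) : B.Nonempty :=
  let ⟨_, _, hK⟩ := hB
  let ⟨k, _, hk⟩ := hK 1
  ⟨k * 1, hk⟩

theorem exists_isOpen_stable_of_not_isSensitive (hT : ¬ IsSensitive T X) {ε : SetRel X X}
    (hε : ε ∈ 𝓤 X) :
    ∃ U : Set X, IsOpen U ∧ U.Nonempty ∧ ∀ y ∈ U, ∀ z ∈ U, ∀ t : T, (t • y, t • z) ∈ ε := by
  obtain ⟨δ, hδ, hδsymm, hδε⟩ := comp_symm_mem_uniformity_sets hε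
  obtain ⟨x₀, V, hV, hx₀V⟩ : ∃ x₀, ∃ V ∈ 𝓝 x₀, ∀ y ∈ V, ∀ t : T, (t • x₀, t • y) ∈ δ := by
    unfold IsSensitive at hT
    push Not at hT
    exact hT δ hδ
  refine ⟨interior V, isOpen_interior, ⟨x₀, mem_interior_iff_mem_nhds.mpr hV⟩,
    fun y hy z hz t => hδε ?_⟩
  exact SetRel.prodMk_mem_comp (SetRel.symm δ (hx₀V y (interior_subset hy) t))
    (hx₀V z (interior_subset hz) t)

variable [TopologicalSpace T] [ContinuousSMul T X]

theorem IsCompact.eventually_smul_mem_uniformity {K : Set T} (hK : IsCompact K)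
    {ε : SetRel X X} (hε : ε ∈ 𝓤 X) (x : X) :
    ∀ᶠ y in 𝓝 x, ∀ k ∈ K, (k • y, k • x) ∈ ε := by
  obtain ⟨v, hv, hvε⟩ := hK.mem_uniformity_of_prod (f := fun y (k : T) => k • y)
    (continuous_snd.smul continuous_fst).continuousOn (mem_univ x) hε
  rw [nhdsWithin_univ] at hv
  exact mem_of_superset hv hvε

theorem exists_smul_mem_comp_of_syndetic_hittingTimes {U V : Set X} {ε : SetRel X X}
    (hε : ε ∈ 𝓤 X) (hU : ∀ y ∈ U, ∀ z ∈ U, ∀ t : T, (t • y, t • z) ∈ ε)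
    (hUV : Syndetic (HittingTimes T U V))
    (hUO : ∀ O : Set X, IsOpen O → O.Nonempty → (HittingTimes T U O).Nonempty) (x : X) :
    ∃ t : T, ∃ v ∈ V, (v, t • x) ∈ ε ○ ε := by
  obtain ⟨K, hK, hKV⟩ := hUV
  obtain ⟨O, hO, hOopen, hxO⟩ := eventually_nhds_iff.mp (hK.eventually_smul_mem_uniformity hε x)
  obtain ⟨s, z, hzU, hszO⟩ := hUO O hOopen ⟨x, hxO⟩
  obtain ⟨k, hk, z', hz'U, hz'V⟩ := hKV s
  have hksz : ((k * s) • z, k • x) ∈ ε := by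
    rw [mul_smul]
    exact hO _ hszO k hk
  exact ⟨k, _, hz'V, SetRel.prodMk_mem_comp (hU z' hz'U z hzU (k * s)) hksz⟩

end Semiflow

theorem syndeticallyTransitive_not_sensitive_implies_minimal_general
    {T X : Type*} [Monoid T] [TopologicalSpace T]
    [UniformSpace X] [MulAction T X] [ContinuousSMul T X]
    (hsynd : ∀ U V : Set X, IsOpen U → U.Nonempty → IsOpen V → V.Nonempty →
      Syndetic (HittingTimes T U V))
    (hnotsens : ¬ ∃ ε ∈ 𝓤 X, ∀ x : X, ∀ V ∈ 𝓝 x, ∃ y ∈ V, ∃ t : T, (t • x, t • y) ∉ ε) :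
    ∀ x : X, Dense (MulAction.orbit T x) := by
  intro x
  refine dense_iff_inter_open.mpr fun W hW ⟨w, hw⟩ => ?_
  obtain ⟨ε₀, hε₀, hballW⟩ := UniformSpace.mem_nhds_iff.mp (hW.mem_nhds hw)
  obtain ⟨ε, hε, hεε₀⟩ := comp3_mem_uniformity hε₀
  obtain ⟨U, hUopen, hUne, hU⟩ := exists_isOpen_stable_of_not_isSensitive hnotsens hε
  have hwV : w ∈ interior (UniformSpace.ball w ε) :=
    mem_interior_iff_mem_nhds.mpr (UniformSpace.ball_mem_nhds w hε)
  obtain ⟨t, v, hv, hvx⟩ := exists_smul_mem_comp_of_syndetic_hittingTimes hε hU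
    (hsynd U (interior (UniformSpace.ball w ε)) hUopen hUne isOpen_interior ⟨w, hwV⟩)
    (fun O hO hOne => (hsynd U O hUopen hUne hO hOne).nonempty) x
  exact ⟨t • x, hballW (hεε₀ (SetRel.prodMk_mem_comp
    (interior_subset hv : v ∈ UniformSpace.ball w ε) hvx)),
    MulAction.mem_orbit x t⟩

/-- If a topological semiflow `(T,X)` on a uniform space is syndetically transitive and
not sensitive to initial conditions, then it is minimal: every orbit is dense. -/
theorem syndeticallyTransitive_not_sensitive_implies_minimal
    {T X : Type*} [Monoid T] [TopologicalSpace T] [ContinuousMul T]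
    [UniformSpace X] [MulAction T X] [ContinuousSMul T X]
    (hsynd : ∀ U V : Set X, IsOpen U → U.Nonempty → IsOpen V → V.Nonempty →
      Syndetic (HittingTimes T U V))
    (hnotsens : ¬ ∃ ε ∈ 𝓤 X, ∀ x : X, ∀ V ∈ 𝓝 x, ∃ y ∈ V, ∃ t : T, (t • x, t • y) ∉ ε) :
    ∀ x : X, Dense (MulAction.orbit T x) :=
  syndeticallyTransitive_not_sensitive_implies_minimal_general hsynd hnotsens
end

section
/- Every non-minimal M-semiflow on a uniform space is sensitive to initial conditions. That is, if a topological semiflow (T,X) on a uniform space (X,𝓤) is topologically transitive with dense almost periodic points, and some orbit T•x is not dense in X, then there is an entourage ε ∈ 𝓤 such that for every x ∈ X and every neighborhood V of x there exist y ∈ V and t ∈ T with (t•x, t•y) ∉ ε. -/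
/-!
If the semiflow is not sensitive, then for every entourage `δ` some nonempty open set `V` has all
its points `δ`-close to each other along the whole semiflow. Pick an almost periodic `q ∈ V`.
Given a target `w` and a point `x`, transitivity gives `s • z` near `w` and `s' • z'` near `x`
with `z, z' ∈ V`, and syndeticity of the returns of `q` gives `k` in a compact `K` with
`s • (k * s') • q` near `s • q`. Compactness of `K` makes `(s * k) • (s' • z')` close to
`(s * k) • x`, so the chain `w ≈ s • z ≈ s • q ≈ s • (k * s') • q ≈ s • (k * s') • z' ≈ (s * k) • x`
shows that every orbit is dense.
-/

open Filter Topology Set Uniformity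

section

open UniformSpace SetRel

variable {T X : Type*} [Monoid T] [UniformSpace X] [MulAction T X]

lemma exists_isOpen_forall_smul_mem_of_not_sensitive
    (hsen : ∀ ε ∈ 𝓤 X, ∃ x : X, ∃ V ∈ 𝓝 x, ∀ y ∈ V, ∀ t : T, (t • x, t • y) ∈ ε)
    {ε : SetRel X X} (hε : ε ∈ 𝓤 X) :
    ∃ V : Set X, IsOpen V ∧ V.Nonempty ∧ ∀ y ∈ V, ∀ z ∈ V, ∀ t : T, (t • y, t • z) ∈ ε := by
  obtain ⟨δ, hδ, hδsymm, hδε⟩ := comp_symm_mem_uniformity_sets hε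
  obtain ⟨x, V, hV, hstab⟩ := hsen δ hδ
  refine ⟨interior V, isOpen_interior, ⟨x, mem_interior_iff_mem_nhds.2 hV⟩,
    fun y hy z hz t => hδε ⟨t • x, ?_, ?_⟩⟩
  · exact hδsymm.symm _ _ (hstab y (interior_subset hy) t)
  · exact hstab z (interior_subset hz) t

variable [TopologicalSpace T] [ContinuousSMul T X]

lemma exists_smul_mem_iterate_comp_of_forall_smul_mem
    (htrans : ∀ U V : Set X, IsOpen U → U.Nonempty → IsOpen V → V.Nonempty →
      (HittingTimes T U V).Nonempty)
    {δ : SetRel X X} (hδ : δ ∈ 𝓤 X) {V : Set X} (hV : IsOpen V)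
    (hstab : ∀ y ∈ V, ∀ z ∈ V, ∀ t : T, (t • y, t • z) ∈ δ)
    {q : X} (hqV : q ∈ V) (hq : ∀ U : Set X, IsOpen U → q ∈ U → Syndetic {t : T | t • q ∈ U})
    (w x : X) : ∃ t : T, (w, t • x) ∈ (δ ○ ·)^[4] δ := by
  obtain ⟨s, z, hzV, hsz⟩ := htrans V (interior (ball w δ)) hV ⟨q, hqV⟩ isOpen_interior
    ⟨w, mem_interior_iff_mem_nhds.2 (ball_mem_nhds w hδ)⟩
  obtain ⟨K, hK, hKret⟩ := hq _ isOpen_interior <| mem_interior_iff_mem_nhds.2 <|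
    (continuous_const_smul s).continuousAt.preimage_mem_nhds (ball_mem_nhds (s • q) hδ)
  obtain ⟨W, hW, hWK⟩ := hK.mem_uniformity_of_prod (f := fun y k => s • k • y) (s := univ)
    (by fun_prop) (mem_univ x) hδ
  rw [nhdsWithin_univ] at hW
  obtain ⟨s', z', hz'V, hs'z'⟩ := htrans V (interior W) hV ⟨q, hqV⟩ isOpen_interior
    ⟨x, mem_interior_iff_mem_nhds.2 hW⟩
  obtain ⟨k, hkK, hk⟩ := hKret s'
  refine ⟨s * k, s • z, interior_subset (s := ball w δ) hsz, s • q, hstab z hzV q hqV s,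
    s • (k * s') • q, interior_subset (s := (s • ·) ⁻¹' ball (s • q) δ) hk,
    s • (k * s') • z', ?_, ?_⟩
  · simpa only [mul_smul] using hstab q hqV z' hz'V (s * (k * s'))
  · simpa only [mul_smul] using hWK _ (interior_subset hs'z') k hkK

theorem dense_orbit_of_not_sensitive
    (htrans : ∀ U V : Set X, IsOpen U → U.Nonempty → IsOpen V → V.Nonempty →
      (HittingTimes T U V).Nonempty)
    (hap : Dense {x : X | ∀ U : Set X, IsOpen U → x ∈ U → Syndetic {t : T | t • x ∈ U}})
    (hsen : ∀ ε ∈ 𝓤 X, ∃ x : X, ∃ V ∈ 𝓝 x, ∀ y ∈ V, ∀ t : T, (t • x, t • y) ∈ ε) (x : X) :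
    Dense (MulAction.orbit T x) := by
  refine dense_iff_inter_open.2 fun O hO ⟨w, hw⟩ => ?_
  obtain ⟨ε, hε, hball⟩ := UniformSpace.mem_nhds_iff.1 (hO.mem_nhds hw)
  obtain ⟨δ, hδ, hδε⟩ := eventually_smallSets.1 (eventually_uniformity_iterate_comp_subset hε 4)
  obtain ⟨V, hV, hVne, hstab⟩ := exists_isOpen_forall_smul_mem_of_not_sensitive hsen hδ
  obtain ⟨q, hq, hqV⟩ := hap.exists_mem_open hV hVne
  obtain ⟨t, ht⟩ :=
    exists_smul_mem_iterate_comp_of_forall_smul_mem htrans hδ hV hstab hqV hq w x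
  exact ⟨t • x, hball (hδε δ subset_rfl ht), MulAction.mem_orbit x t⟩

end

theorem nonminimal_msemiflow_sensitive_general
    {T X : Type*} [Monoid T] [TopologicalSpace T]
    [UniformSpace X] [MulAction T X] [ContinuousSMul T X]
    (htrans : ∀ U V : Set X, IsOpen U → U.Nonempty → IsOpen V → V.Nonempty →
      (HittingTimes T U V).Nonempty)
    (hap : Dense {x : X | ∀ U : Set X, IsOpen U → x ∈ U → Syndetic {t : T | t • x ∈ U}})
    (hnonmin : ∃ x : X, ¬ Dense (MulAction.orbit T x)) :
    ∃ ε ∈ 𝓤 X, ∀ x : X, ∀ V ∈ 𝓝 x, ∃ y ∈ V, ∃ t : T, (t • x, t • y) ∉ ε := by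
  by_contra hsen
  push Not at hsen
  obtain ⟨x, hx⟩ := hnonmin
  exact hx (dense_orbit_of_not_sensitive htrans hap hsen x)

/-- Every non-minimal M-semiflow on a uniform space is sensitive to initial conditions:
if `(T,X)` is topologically transitive with dense almost periodic points and some orbit
is not dense, then there is an entourage `ε` such that for every `x` and every
neighborhood `V` of `x` there are `y ∈ V` and `t ∈ T` with `(t • x, t • y) ∉ ε`. -/
theorem nonminimal_msemiflow_sensitive
    {T X : Type*} [Monoid T] [TopologicalSpace T] [ContinuousMul T]
    [UniformSpace X] [MulAction T X] [ContinuousSMul T X]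
    (htrans : ∀ U V : Set X, IsOpen U → U.Nonempty → IsOpen V → V.Nonempty →
      (HittingTimes T U V).Nonempty)
    (hap : Dense {x : X | ∀ U : Set X, IsOpen U → x ∈ U → Syndetic {t : T | t • x ∈ U}})
    (hnonmin : ∃ x : X, ¬ Dense (MulAction.orbit T x)) :
    ∃ ε ∈ 𝓤 X, ∀ x : X, ∀ V ∈ 𝓝 x, ∃ y ∈ V, ∃ t : T, (t • x, t • y) ∉ ε :=
  nonminimal_msemiflow_sensitive_general htrans hap hnonmin
end

section
/- Devaney chaos implies sensitivity: let (T,X) be a topological semiflow on a uniform space (X,𝓤) which is Devaney chaotic, i.e., topologically transitive, with a dense set of periodic points, and not minimal. Then (T,X) is sensitive to initial conditions, and consequently X has no isolated points. -/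
open Filter Topology Set Uniformity

/-- A periodic point `p ∈ V` with `t₀ • p ∈ W` and return times `K`-syndetic gives
`t₀ k t • p = t₀ • p ∈ W`, so `t₀ K` witnesses syndeticity of `N_T(V, W)`. -/
theorem syndetic_hittingTimes {T X : Type*} [Monoid T] [TopologicalSpace T] [ContinuousMul T]
    [TopologicalSpace X] [MulAction T X] [ContinuousConstSMul T X]
    (hper : Dense {x : X | Syndetic {t : T | t • x = x}})
    {V W : Set X} (hV : IsOpen V) (hW : IsOpen W) (hVW : (HittingTimes T V W).Nonempty) :
    Syndetic (HittingTimes T V W) := by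
  obtain ⟨t₀, u, huV, huW⟩ := hVW
  obtain ⟨p, ⟨K, hK, hKp⟩, hpV, hpW⟩ :=
    hper.exists_mem_open (hV.inter (hW.preimage (continuous_const_smul t₀))) ⟨u, huV, huW⟩
  refine ⟨(t₀ * ·) '' K, hK.image (continuous_const_mul t₀), fun t => ?_⟩
  obtain ⟨k, hk, hkt⟩ := hKp t
  refine ⟨t₀ * k, mem_image_of_mem _ hk, p, hpV, ?_⟩
  have hkt : (k * t) • p = p := hkt
  rwa [mul_assoc, mul_smul, hkt]

theorem IsCompact.equicontinuousAt_smul {T X : Type*} [TopologicalSpace T] [UniformSpace X]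
    [SMul T X] [ContinuousSMul T X] {K : Set T} (hK : IsCompact K) (x₀ : X) :
    EquicontinuousAt (fun (k : K) (x : X) => (k : T) • x) x₀ := fun ε hε => by
  have hcont : Continuous fun p : X × T => (p.2 • x₀, p.2 • p.1) :=
    (continuous_snd.smul continuous_const).prodMk (continuous_snd.smul continuous_fst)
  have := hK.eventually_forall_of_forall_eventually (P := fun x k => (k • x₀, k • x) ∈ ε)
    fun k _ => (hcont.tendsto (x₀, k)).mono_right (nhds_le_uniformity _) hε
  exact this.mono fun x hx k => hx k k.2

def Sensitive (T X : Type*) [Monoid T] [UniformSpace X] [MulAction T X] : Prop :=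
  ∃ ε ∈ 𝓤 X, ∀ x : X, ∀ V ∈ 𝓝 x, ∃ y ∈ V, ∃ t : T, (t • x, t • y) ∉ ε

section Sensitivity

variable {T X : Type*} [Monoid T] [UniformSpace X] [MulAction T X]

/-- Of two `δ`-apart points, one is `ε`-far from the centre once `ε ○ ε ⊆ δ`. -/
theorem sensitive_of_forall_isOpen_exists_smul_notMem {δ : Set (X × X)} (hδ : δ ∈ 𝓤 X)
    (h : ∀ O : Set X, IsOpen O → O.Nonempty →
      ∃ t : T, ∃ v₁ ∈ O, ∃ v₂ ∈ O, (t • v₁, t • v₂) ∉ δ) :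
    Sensitive T X := by
  obtain ⟨ε, hε, hεs, hεδ⟩ := comp_symm_mem_uniformity_sets hδ
  refine ⟨ε, hε, fun x V hV => ?_⟩
  obtain ⟨O, hOV, hO, hxO⟩ := mem_nhds_iff.1 hV
  obtain ⟨t, v₁, hv₁, v₂, hv₂, hδ⟩ := h O hO ⟨x, hxO⟩
  by_contra! hclose
  exact hδ (hεδ (SetRel.prodMk_mem_comp (hεs.symm _ _ (hclose v₁ (hOV hv₁) t))
    (hclose v₂ (hOV hv₂) t)))

theorem Sensitive.nhdsWithin_compl_neBot (h : Sensitive T X) (x : X) : NeBot (𝓝[≠] x) := by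
  obtain ⟨ε, hε, hsens⟩ := h
  rw [← mem_closure_iff_nhdsWithin_neBot, mem_closure_iff_nhds]
  intro V hV
  obtain ⟨y, hyV, t, hty⟩ := hsens x V hV
  exact ⟨y, hyV, fun hyx => hty (hyx ▸ refl_mem_uniformity hε)⟩

/-- The separating time is `k s`: `s` moves `v₁ ∈ O` next to `x₀`, so by equicontinuity at `x₀`
`k s • v₁` stays close to the orbit point `k • x₀`, while syndeticity of `N_T(O, W)` lets the
same `k` send some `v₂ ∈ O` into the neighbourhood `W` of `z`; as `z` is far from the orbit,
`k s • v₁` and `k s • v₂` cannot be close. -/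
theorem exists_entourage_forall_isOpen_exists_smul_notMem [TopologicalSpace T] [ContinuousMul T]
    [ContinuousSMul T X]
    (htrans : ∀ U V : Set X, IsOpen U → U.Nonempty → IsOpen V → V.Nonempty →
      (HittingTimes T U V).Nonempty)
    (hper : Dense {x : X | Syndetic {t : T | t • x = x}})
    {x₀ z : X} (hz : z ∉ closure (MulAction.orbit T x₀)) :
    ∃ δ ∈ 𝓤 X, ∀ O : Set X, IsOpen O → O.Nonempty →
      ∃ t : T, ∃ v₁ ∈ O, ∃ v₂ ∈ O, (t • v₁, t • v₂) ∉ δ := by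
  have hfar := mem_nhds_uniformity_iff_left.1 (isClosed_closure.isOpen_compl.mem_nhds hz)
  obtain ⟨δ, hδ, hδδδ⟩ := comp3_mem_uniformity hfar
  refine ⟨δ, hδ, fun O hO hOne => ?_⟩
  obtain ⟨W, hWz, hW, hzW⟩ := mem_nhds_iff.1 (mem_nhds_right z hδ)
  obtain ⟨K, hK, hKN⟩ := syndetic_hittingTimes hper hO hW (htrans O W hO hOne hW ⟨z, hzW⟩)
  obtain ⟨U, hUx₀, hU, hx₀U⟩ := mem_nhds_iff.1 (hK.equicontinuousAt_smul x₀ δ hδ)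
  obtain ⟨s, v₁, hv₁, hsv₁⟩ := htrans O U hO hOne hU ⟨x₀, hx₀U⟩
  obtain ⟨k, hk, v₂, hv₂, hkv₂⟩ := hKN s
  refine ⟨k * s, v₁, hv₁, v₂, hv₂, fun hv₁v₂ => ?_⟩
  have hkx₀ : (k • x₀, (k * s) • v₁) ∈ δ := by
    rw [mul_smul]
    exact hUx₀ hsv₁ ⟨k, hk⟩
  exact hδδδ (SetRel.prodMk_mem_comp hkx₀ (SetRel.prodMk_mem_comp hv₁v₂ (hWz hkv₂))) rfl
    (subset_closure (MulAction.mem_orbit x₀ k))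

end Sensitivity

/-- Devaney chaos implies sensitivity: a topological semiflow `(T,X)` on a uniform space
which is topologically transitive, has a dense set of periodic points (points whose
stabilizer is syndetic), and is not minimal, is sensitive to initial conditions; and
consequently `X` has no isolated points. -/
theorem devaney_chaos_implies_sensitive
    {T X : Type*} [Monoid T] [TopologicalSpace T] [ContinuousMul T]
    [UniformSpace X] [MulAction T X] [ContinuousSMul T X]
    (htrans : ∀ U V : Set X, IsOpen U → U.Nonempty → IsOpen V → V.Nonempty →
      (HittingTimes T U V).Nonempty)
    (hper : Dense {x : X | Syndetic {t : T | t • x = x}})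
    (hnonmin : ∃ x : X, ¬ Dense (MulAction.orbit T x)) :
    (∃ ε ∈ 𝓤 X, ∀ x : X, ∀ V ∈ 𝓝 x, ∃ y ∈ V, ∃ t : T, (t • x, t • y) ∉ ε) ∧
    (∀ x : X, Filter.NeBot (𝓝[≠] x)) := by
  obtain ⟨x₀, hx₀⟩ := hnonmin
  obtain ⟨z, hz⟩ : ∃ z, z ∉ closure (MulAction.orbit T x₀) := by
    simpa [Dense] using hx₀
  obtain ⟨δ, hδ, hsep⟩ := exists_entourage_forall_isOpen_exists_smul_notMem htrans hper hz
  have hsens : Sensitive T X := sensitive_of_forall_isOpen_exists_smul_notMem hδ hsep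
  exact ⟨hsens, hsens.nhdsWithin_compl_neBot⟩
end

section
/- Let (T,X) be a topological semiflow on a Hausdorff topological space X with T a non-compact topological monoid. If x₀ ∈ X is a transitive point (the orbit T•x₀ is dense in X) and the orbit T•x₀ has empty interior in X, then x₀ is a recurrent point: for every neighborhood U of x₀ and every compact subset K of T there exists t ∈ T \ K with t•x₀ ∈ U. -/
open Filter Topology Set

/-- A transitive point whose orbit has empty interior, for a semiflow with non-compact
phase monoid on a Hausdorff space, is a recurrent point: for every neighborhood `U` of
`x₀` and every compact `K ⊆ T` there is `t ∉ K` with `t • x₀ ∈ U`. -/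
theorem transitive_point_empty_interior_recurrent
    {T X : Type*} [Monoid T] [TopologicalSpace T] [ContinuousMul T]
    [TopologicalSpace X] [T2Space X] [MulAction T X] [ContinuousSMul T X]
    (hT : ¬ IsCompact (Set.univ : Set T))
    (x₀ : X) (hdense : Dense (MulAction.orbit T x₀))
    (hint : interior (MulAction.orbit T x₀) = ∅) :
    ∀ U ∈ 𝓝 x₀, ∀ K : Set T, IsCompact K → ∃ t : T, t ∉ K ∧ t • x₀ ∈ U := by
  intro U hU K hK
  by_contra h
  push_neg at h
  -- the compact image K • x₀
  have hc : IsCompact ((fun t : T => t • x₀) '' K) :=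
    hK.image (continuous_id.smul continuous_const)
  have hclosed : IsClosed ((fun t : T => t • x₀) '' K) := hc.isClosed
  -- interior U ∩ orbit ⊆ K • x₀
  have hsub : interior U ∩ MulAction.orbit T x₀ ⊆ (fun t : T => t • x₀) '' K := by
    rintro y ⟨hyU, t, rfl⟩
    have ht : t ∈ K := by
      by_contra htK
      exact absurd (interior_subset hyU) (h t htK)
    exact ⟨t, ht, rfl⟩
  have h1 : interior U ⊆ closure (interior U ∩ MulAction.orbit T x₀) :=
    hdense.open_subset_closure_inter isOpen_interior
  have h2 : interior U ⊆ (fun t : T => t • x₀) '' K := fun y hy =>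
    hclosed.closure_subset (closure_mono hsub (h1 hy))
  have h3 : interior U ⊆ MulAction.orbit T x₀ := fun y hy => by
    rcases h2 hy with ⟨t, _, rfl⟩; exact ⟨t, rfl⟩
  have h4 : x₀ ∈ interior (MulAction.orbit T x₀) :=
    interior_maximal h3 isOpen_interior (mem_interior_iff_mem_nhds.2 hU)
  rw [hint] at h4
  exact h4
end

section
/- Multi-dimensional chaos criterion: let (T,X) be a topological flow on a Polish space X with T an abelian topological group acting jointly continuously. Assume (a) (T,X) is topologically transitive and there is a transitive point x ∈ X whose orbit T•x has empty interior in X, and (b) there exists a periodic point p ∈ X (its stabilizer {t : t•p = p} is syndetic in T). Then for every increasing sequence F₁ ⊆ F₂ ⊆ F₃ ⊆ ⋯ of compact subsets of T there exists an infinite set Θ ⊆ X such that for every k ≥ 2 and all pairwise distinct points x₁,…,x_k ∈ Θ there are sequences (t_n) in T and (s_n) in T with s_n ∉ F_n for all n, such that t_n•x_i → p for every i = 1,…,k, and s_n•x_i → x_i for every i = 1,…,k, as n → ∞. -/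
/-!
The infinite set is `Θ = S • x`, where `S` is the stabilizer of `p`. Since `S` is syndetic,
a finite `S • x` would make the orbit of `x` compact, hence closed and, being dense, all of `X`.
Given `z i = e i • x` with `e i ∈ S`, the map `Φ y = (e i • y)ᵢ` commutes with the action
(`T` is abelian), sends `x` to `z` and `p` to `(p, …, p)`. So it suffices to move `x` close
to `p` (density of the orbit) and close to `x` by times outside any compact set; the latter
holds because otherwise a neighbourhood of `x` would lie in a compact piece of the orbit,
giving the orbit nonempty interior.
-/

open Filter Topology Set

theorem Filter.exists_seq_tendsto_of_forall_exists_mem {α Y : Type*} {l : Filter Y}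
    [l.IsCountablyGenerated] {f : α → Y} {P : ℕ → α → Prop}
    (h : ∀ n, ∀ U ∈ l, ∃ a, P n a ∧ f a ∈ U) :
    ∃ a : ℕ → α, (∀ n, P n (a n)) ∧ Tendsto (f ∘ a) atTop l := by
  obtain ⟨u, hu⟩ := l.exists_antitone_basis
  choose a ha hau using fun n => h n (u n) (hu.mem n)
  exact ⟨a, ha, hu.tendsto hau⟩

section Orbit

variable {T X : Type*} [TopologicalSpace T] [TopologicalSpace X]

theorem exists_smul_mem_of_interior_orbit_eq_empty [Monoid T] [MulAction T X]
    [ContinuousSMul T X] [T2Space X] {x : X} (hx : Dense (MulAction.orbit T x))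
    (hxint : interior (MulAction.orbit T x) = ∅) {G : Set T} (hG : IsCompact G)
    {U : Set X} (hU : U ∈ 𝓝 x) : ∃ s ∉ G, s • x ∈ U := by
  by_contra! hGU
  have hGx : IsClosed ((· • x) '' G) := (hG.image (continuous_id.smul continuous_const)).isClosed
  have hsub : interior U ⊆ MulAction.orbit T x :=
    calc interior U
        = interior U ∩ closure (MulAction.orbit T x) := by rw [hx.closure_eq, inter_univ]
      _ ⊆ closure (interior U ∩ MulAction.orbit T x) := isOpen_interior.inter_closure
      _ ⊆ (· • x) '' G := by
          refine closure_minimal ?_ hGx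
          rintro _ ⟨hyU, s, rfl⟩
          by_contra hsG
          exact hGU s (fun hs => hsG ⟨s, hs, rfl⟩) (interior_subset hyU)
      _ ⊆ MulAction.orbit T x := image_subset_range _ _
  have := interior_maximal hsub isOpen_interior (mem_interior_iff_mem_nhds.2 hU)
  rwa [hxint] at this

variable [Group T] [IsTopologicalGroup T] [MulAction T X] [ContinuousSMul T X]

theorem Syndetic.isCompact_orbit {B : Set T} (hB : Syndetic B) {x : X}
    (hBx : IsCompact ((· • x) '' B)) : IsCompact (MulAction.orbit T x) := by
  obtain ⟨K, hK, hKB⟩ := hB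
  suffices MulAction.orbit T x = (fun q : T × X => q.1⁻¹ • q.2) '' (K ×ˢ ((· • x) '' B)) by
    rw [this]
    exact (hK.prod hBx).image (continuous_fst.inv.smul continuous_snd)
  refine Subset.antisymm ?_ ?_
  · rintro _ ⟨t, rfl⟩
    obtain ⟨k, hk, hkt⟩ := hKB t
    exact ⟨(k, (k * t) • x), ⟨hk, k * t, hkt, rfl⟩, by simp [smul_smul]⟩
  · rintro _ ⟨⟨k, _⟩, ⟨-, b, -, rfl⟩, rfl⟩
    exact ⟨k⁻¹ * b, mul_smul _ _ _⟩

theorem infinite_image_smul_of_syndetic [T2Space X] {x : X} (hx : Dense (MulAction.orbit T x))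
    (hxint : interior (MulAction.orbit T x) = ∅) {B : Set T} (hB : Syndetic B) :
    ((· • x) '' B).Infinite := by
  intro hfin
  have horbit : MulAction.orbit T x = univ :=
    (hB.isCompact_orbit hfin.isCompact).isClosed.closure_eq ▸ hx.closure_eq
  rw [horbit, interior_univ] at hxint
  exact (eq_empty_iff_forall_notMem.1 hxint x) (mem_univ x)

end Orbit

theorem multidimensional_chaos_criterion_general
    {T X : Type*} [CommGroup T] [TopologicalSpace T] [IsTopologicalGroup T]
    [TopologicalSpace X] [PolishSpace X] [MulAction T X] [ContinuousSMul T X]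
    (x : X) (hx : Dense (MulAction.orbit T x)) (hxint : interior (MulAction.orbit T x) = ∅)
    (p : X) (hp : Syndetic {t : T | t • p = p}) :
    ∀ F : ℕ → Set T, (∀ n, IsCompact (F n)) → Monotone F →
      ∃ Θ : Set X, Θ.Infinite ∧
        ∀ k : ℕ, 2 ≤ k → ∀ z : Fin k → X, (∀ i, z i ∈ Θ) → Function.Injective z →
          ∃ t s : ℕ → T, (∀ n, s n ∉ F n) ∧
            (∀ i, Tendsto (fun n => t n • z i) atTop (𝓝 p)) ∧
            (∀ i, Tendsto (fun n => s n • z i) atTop (𝓝 (z i))) := by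
  intro F hF _
  refine ⟨(· • x) '' {t | t • p = p}, infinite_image_smul_of_syndetic hx hxint hp, ?_⟩
  intro k _ z hz _
  choose e he hez using hz
  let Φ : X → Fin k → X := fun y i => e i • y
  have hΦ : Continuous Φ := continuous_pi fun i => continuous_const_smul (e i)
  have hΦ_smul (t : T) (y : X) : Φ (t • y) = t • Φ y := funext fun i => smul_comm (e i) t y
  have hΦx : Φ x = z := funext hez
  have hΦp : Φ p = fun _ => p := funext he
  obtain ⟨t, -, ht⟩ := exists_seq_tendsto_of_forall_exists_mem (f := (· • z))
    (P := fun _ _ => True) fun _ U hU => by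
      obtain ⟨_, ⟨t, rfl⟩, htU⟩ := hx.inter_nhds_nonempty (hΦ.tendsto p (by rwa [hΦp]))
      exact ⟨t, trivial, by simpa [hΦ_smul, hΦx] using htU⟩
  obtain ⟨s, hsF, hs⟩ := exists_seq_tendsto_of_forall_exists_mem (f := (· • z))
    (P := fun n s => s ∉ F n) fun n U hU => by
      obtain ⟨s, hsF, hsU⟩ :=
        exists_smul_mem_of_interior_orbit_eq_empty hx hxint (hF n) (hΦ.tendsto x (by rwa [hΦx]))
      exact ⟨s, hsF, by simpa [hΦ_smul, hΦx] using hsU⟩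
  exact ⟨t, s, hsF, tendsto_pi_nhds.1 ht, tendsto_pi_nhds.1 hs⟩

/-- Multi-dimensional chaos criterion: let `(T,X)` be a topological flow on a Polish space
`X` with `T` an abelian topological group. If `(T,X)` is topologically transitive with a
transitive point whose orbit has empty interior, and there is a periodic point `p`, then
for every increasing sequence of compact sets `F n ⊆ T` there is an infinite set `Θ ⊆ X`
such that any `k ≥ 2` distinct points of `Θ` are simultaneously proximal to `p` along a
sequence `(t n)` and simultaneously recurrent along a sequence `(s n)` with `s n ∉ F n`. -/
theorem multidimensional_chaos_criterion
    {T X : Type*} [CommGroup T] [TopologicalSpace T] [IsTopologicalGroup T]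
    [TopologicalSpace X] [PolishSpace X] [MulAction T X] [ContinuousSMul T X]
    (htrans : ∀ U V : Set X, IsOpen U → U.Nonempty → IsOpen V → V.Nonempty →
      ∃ t : T, ∃ x ∈ U, t • x ∈ V)
    (x : X) (hx : Dense (MulAction.orbit T x)) (hxint : interior (MulAction.orbit T x) = ∅)
    (p : X) (hp : Syndetic {t : T | t • p = p}) :
    ∀ F : ℕ → Set T, (∀ n, IsCompact (F n)) → Monotone F →
      ∃ Θ : Set X, Θ.Infinite ∧
        ∀ k : ℕ, 2 ≤ k → ∀ z : Fin k → X, (∀ i, z i ∈ Θ) → Function.Injective z →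
          ∃ t s : ℕ → T, (∀ n, s n ∉ F n) ∧
            (∀ i, Tendsto (fun n => t n • z i) atTop (𝓝 p)) ∧
            (∀ i, Tendsto (fun n => s n • z i) atTop (𝓝 (z i))) :=
  multidimensional_chaos_criterion_general x hx hxint p hp
end

section
/- Let (T,X) be a topological flow on a Polish space X with T an abelian group equipped with the discrete topology. If (T,X) is Devaney chaotic (topologically transitive, periodic points dense, and not minimal), then (T,X) is multi-dimensional Li-Yorke chaotic: for every increasing sequence F₁ ⊆ F₂ ⊆ ⋯ of finite subsets of T there is an uncountable set Θ ⊆ X such that for every k ≥ 2 and all pairwise distinct x₁,…,x_k ∈ Θ there exist a point p ∈ X and sequences (t_n), (s_n) in T with s_n ∉ F_n for all n, such that t_n•x_i → p for each i and s_n•x_i → x_i for each i, as n → ∞. -/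
/-!
A Devaney chaotic flow has no isolated points, `T` is infinite, and by Baire category some point
`z` has a dense orbit. Fix a periodic point `q`; its stabilizer `H` has finite index, so finitely
many translates of `Y = closure (H • z)` cover `X`, whence `Y` has interior and contains a
translate `p` of `q`, which `H` still fixes. Because `H` is abelian and fixes `p ∈ Y`, one element
of `H` brings finitely many open sets meeting `Y` simultaneously close to `p`; and periodic points
in finitely many open sets share periods outside any given finite subset of `T`. Refining a Cantor
scheme inside the interior of `Y` by these two moves, with accuracy `1 / (n + 1)` at stage `n`,
gives an uncountable `Θ` and sequences `tₙ`, `sₙ ∉ Fₙ` with `tₙ • x → p` and `sₙ • x → x` for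
every `x ∈ Θ`.
-/

open Filter Topology Set

def SyndeticDiscrete {T : Type*} [Monoid T] (B : Set T) : Prop :=
  ∃ K : Set T, K.Finite ∧ ∀ t : T, ∃ k ∈ K, k * t ∈ B

open Function Metric MulAction Pointwise

section CantorScheme

variable {X : Type*}

structure IsCantorLevel [TopologicalSpace X] (G : Set X) {n : ℕ} (V : (Fin n → Bool) → Set X) :
    Prop where
  isOpen : ∀ j, IsOpen (V j)
  nonempty : ∀ j, (V j).Nonempty
  subset : ∀ j, V j ⊆ G
  pairwise_disjoint : Pairwise (Disjoint on V)

def FinitelyShrinkable [TopologicalSpace X] (G : Set X) (Q : Set X → Prop) : Prop :=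
  ∀ ⦃ι : Type⦄ [Finite ι] (U : ι → Set X), (∀ i, IsOpen (U i) ∧ (U i).Nonempty ∧ U i ⊆ G) →
    ∃ W : ι → Set X, (∀ i, IsOpen (W i) ∧ (W i).Nonempty ∧ W i ⊆ U i) ∧ Q (⋃ i, W i)

variable [MetricSpace X]

lemma IsOpen.exists_closure_subset_closedBall {U : Set X} (hU : IsOpen U) {x : X} (hx : x ∈ U)
    {r : ℝ} (hr : 0 < r) : ∃ V, IsOpen V ∧ x ∈ V ∧ closure V ⊆ U ∧ V ⊆ closedBall x r := by
  obtain ⟨ε, hε, hεU⟩ := nhds_basis_closedBall.mem_iff.1 (hU.mem_nhds hx)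
  refine ⟨ball x (min ε r), isOpen_ball, mem_ball_self (lt_min hε hr), ?_, ?_⟩
  · exact closure_ball_subset_closedBall.trans
      ((closedBall_subset_closedBall (min_le_left _ _)).trans hεU)
  · exact ball_subset_closedBall.trans (closedBall_subset_closedBall (min_le_right _ _))

lemma IsOpen.exists_pairwise_disjoint_bool [PerfectSpace X] {U : Set X} (hU : IsOpen U)
    (hne : U.Nonempty) {r : ℝ} (hr : 0 < r) :
    ∃ A : Bool → Set X, Pairwise (Disjoint on A) ∧
      ∀ b, IsOpen (A b) ∧ (A b).Nonempty ∧ closure (A b) ⊆ U ∧ ∃ c, A b ⊆ closedBall c r := by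
  obtain ⟨x, hx⟩ := hne
  obtain ⟨y, ⟨-, hy⟩, hyx⟩ := preperfect_iff_nhds.1 hU.preperfect x hx univ univ_mem
  obtain ⟨u, v, hu, hv, hyu, hxv, huv⟩ := t2_separation hyx
  obtain ⟨A₁, hA₁, hyA₁, hA₁U, hA₁y⟩ := (hU.inter hu).exists_closure_subset_closedBall ⟨hy, hyu⟩ hr
  obtain ⟨A₀, hA₀, hxA₀, hA₀U, hA₀x⟩ := (hU.inter hv).exists_closure_subset_closedBall ⟨hx, hxv⟩ hr
  refine ⟨fun b => bif b then A₁ else A₀, pairwise_disjoint_on_bool.2 ?_,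
    Bool.forall_bool.2 ⟨⟨hA₀, ⟨x, hxA₀⟩, hA₀U.trans inter_subset_left, x, hA₀x⟩,
      ⟨hA₁, ⟨y, hyA₁⟩, hA₁U.trans inter_subset_left, y, hA₁y⟩⟩⟩
  exact huv.mono (subset_closure.trans (hA₁U.trans inter_subset_right))
    (subset_closure.trans (hA₀U.trans inter_subset_right))

lemma IsCantorLevel.exists_succ [PerfectSpace X] {G : Set X} {n : ℕ}
    {V : (Fin n → Bool) → Set X} (hV : IsCantorLevel G V) {Q : Set X → Prop}
    (hQ : FinitelyShrinkable G Q) {r : ℝ} (hr : 0 < r) :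
    ∃ W : (Fin (n + 1) → Bool) → Set X, IsCantorLevel G W ∧
      (∀ j, closure (W j) ⊆ V (Fin.init j)) ∧ (∀ j, ∃ c, W j ⊆ closedBall c r) ∧
      Q (⋃ j, W j) := by
  choose A hAdisj hA using fun i => (hV.isOpen i).exists_pairwise_disjoint_bool (hV.nonempty i) hr
  obtain ⟨W, hW, hWQ⟩ := hQ (fun j : Fin (n + 1) → Bool => A (Fin.init j) (j (Fin.last n))) fun j =>
    ⟨(hA _ _).1, (hA _ _).2.1, subset_closure.trans ((hA _ _).2.2.1.trans (hV.subset _))⟩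
  have hWV : ∀ j, closure (W j) ⊆ V (Fin.init j) :=
    fun j => (closure_mono (hW j).2.2).trans (hA _ _).2.2.1
  refine ⟨W, ⟨fun j => (hW j).1, fun j => (hW j).2.1,
    fun j => subset_closure.trans ((hWV j).trans (hV.subset _)), fun j j' hjj' => ?_⟩,
    hWV, fun j => ?_, hWQ⟩
  · by_cases hinit : Fin.init j = Fin.init j'
    · have hlast : j (Fin.last n) ≠ j' (Fin.last n) := fun h => hjj' <| by
        rw [← Fin.snoc_init_self j, ← Fin.snoc_init_self j', hinit, h]
      have hW' := (hW j').2.2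
      rw [← hinit] at hW'
      exact (hAdisj (Fin.init j) hlast).mono (hW j).2.2 hW'
    · exact (hV.pairwise_disjoint hinit).mono (subset_closure.trans (hWV j))
        (subset_closure.trans (hWV j'))
  · obtain ⟨c, hc⟩ := (hA _ _).2.2.2
    exact ⟨c, (hW j).2.2.trans hc⟩

lemma nonempty_iInter_of_closure_succ_subset [CompleteSpace X] {s : ℕ → Set X}
    (hne : ∀ n, (s n).Nonempty) (hnest : ∀ n, closure (s (n + 1)) ⊆ s n)
    (hsmall : ∀ n, ∃ c, s n ⊆ closedBall c (1 / (n + 1))) : (⋂ n, s n).Nonempty := by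
  have hanti : Antitone fun n => closure (s n) :=
    antitone_nat_of_succ_le fun n => (hnest n).trans subset_closure
  have hball : ∀ n, ∃ c, closure (s n) ⊆ closedBall c (1 / (n + 1)) := fun n =>
    let ⟨c, hc⟩ := hsmall n; ⟨c, closure_minimal hc isClosed_closedBall⟩
  have hdiam : Tendsto (fun n => diam (closure (s n))) atTop (𝓝 0) := by
    refine squeeze_zero (fun _ => diam_nonneg) (fun n => ?_)
      (by simpa only [mul_zero] using tendsto_one_div_add_atTop_nhds_zero_nat.const_mul (2 : ℝ))
    obtain ⟨c, hc⟩ := hball n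
    exact (diam_mono hc isBounded_closedBall).trans (diam_closedBall (by positivity))
  obtain ⟨x, hx⟩ := nonempty_iInter_of_nonempty_biInter (s := fun n => closure (s n))
    (fun _ => isClosed_closure)
    (fun n => let ⟨c, hc⟩ := hball n; isBounded_closedBall.subset hc)
    (fun N => ((hne N).closure).mono fun x hx => mem_iInter₂.2 fun n hn => hanti hn hx) hdiam
  exact ⟨x, mem_iInter.2 fun n => hnest n (mem_iInter.1 hx (n + 1))⟩

lemma not_countable_nat_bool : ¬ Countable (ℕ → Bool) := by
  rw [← Cardinal.mk_le_aleph0_iff, not_le]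
  simpa using Cardinal.cantor Cardinal.aleph0

theorem exists_not_countable_of_finitelyShrinkable [CompleteSpace X] [PerfectSpace X]
    {G : Set X} (hG : (interior G).Nonempty) {Q : ℕ → Set X → Prop} (hQ : ∀ n, Antitone (Q n))
    (hshrink : ∀ n, FinitelyShrinkable G (Q n)) : ∃ Θ : Set X, ¬ Θ.Countable ∧ ∀ n, Q n Θ := by
  choose! next hnext using fun n (V : (Fin n → Bool) → Set X) (hV : IsCantorLevel G V) =>
    hV.exists_succ (hshrink n) (Nat.one_div_pos_of_nat (n := n))
  let level : (n : ℕ) → (Fin n → Bool) → Set X := fun n => Nat.rec (fun _ => interior G) next n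
  have hlevel : ∀ n, IsCantorLevel G (level n) := by
    intro n
    induction n with
    | zero => exact ⟨fun _ => isOpen_interior, fun _ => hG, fun _ => interior_subset,
        fun j j' h => (h (Subsingleton.elim j j')).elim⟩
    | succ n ih => exact (hnext n _ ih).1
  have hθ (a : ℕ → Bool) : (⋂ n, level (n + 1) fun i => a i).Nonempty :=
    nonempty_iInter_of_closure_succ_subset (fun n => (hlevel (n + 1)).nonempty _)
      (fun n => (hnext (n + 1) _ (hlevel _)).2.1 _) (fun n => (hnext n _ (hlevel n)).2.2.1 _)
  choose θ hθ using hθ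
  have hmem (a : ℕ → Bool) (n : ℕ) : θ a ∈ level (n + 1) fun i => a i := mem_iInter.1 (hθ a) n
  have hinj : Function.Injective θ := by
    intro a b hab
    by_contra hne
    obtain ⟨i, hi⟩ := Function.ne_iff.1 hne
    have hres : (fun k : Fin (i + 1) => a k) ≠ fun k : Fin (i + 1) => b k :=
      fun h => hi (congrFun h (Fin.last i))
    exact ((hlevel (i + 1)).pairwise_disjoint hres).ne_of_mem (hmem a i) (hmem b i) hab
  refine ⟨range θ, fun hc => ?_, fun n => hQ n ?_ (hnext n _ (hlevel n)).2.2.2⟩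
  · have := hc.to_subtype
    exact not_countable_nat_bool (rangeFactorization_injective.2 hinj).countable
  · rintro _ ⟨a, rfl⟩
    exact mem_iUnion.2 ⟨_, hmem a n⟩

end CantorScheme

section MonoidAction

variable (M : Type*) {X : Type*} [Monoid M] [TopologicalSpace X] [MulAction M X]

lemma exists_dense_orbit [ContinuousConstSMul M X] [IsTopologicallyTransitive M X]
    [SecondCountableTopology X] [BaireSpace X] [Nonempty X] :
    ∃ z : X, Dense (orbit M z) := by
  obtain ⟨b, hbc, hbe, hb⟩ := TopologicalSpace.exists_countable_basis X
  obtain ⟨z, hz⟩ := (dense_biInter_of_isOpen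
    (fun B hB => isOpen_iUnion fun m => (hb.isOpen hB).preimage (continuous_const_smul m)) hbc
    (fun B hB => (hb.isOpen hB).dense_iUnion_preimage_smul M
      (nonempty_iff_ne_empty.2 fun h => hbe (h ▸ hB)))).nonempty
  refine ⟨z, hb.dense_iff.2 fun B hB _ => ?_⟩
  obtain ⟨m, hm⟩ := mem_iUnion.1 (mem_iInter₂.1 hz B hB)
  exact ⟨m • z, hm, mem_orbit z m⟩

lemma dense_orbit_of_isOpen_singleton [IsTopologicallyTransitive M X] {x : X} (hx : IsOpen {x}) :
    Dense (orbit M x) := by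
  convert hx.dense_iUnion_smul M (singleton_nonempty x) using 1
  simp [smul_set_singleton, orbit]

variable {M}

lemma infinite_of_dense_orbit [T1Space X] [PerfectSpace X] {z : X} (hz : Dense (orbit M z)) :
    Infinite M := by
  by_contra hfin
  rw [not_infinite_iff_finite] at hfin
  have hfinite : (orbit M z).Finite := finite_range _
  have : Finite X :=
    finite_univ_iff.1 (hfinite.isClosed.closure_eq.symm.trans hz.closure_eq ▸ hfinite)
  exact (PerfectSpace.not_isolated z).ne
    ((isOpen_singleton_iff_punctured_nhds z).1 (isOpen_discrete _))

end MonoidAction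

section GroupAction

variable {T X : Type*} [Group T] [MulAction T X]

lemma SyndeticDiscrete.finiteIndex {H : Subgroup T} (h : SyndeticDiscrete (H : Set T)) :
    H.FiniteIndex := by
  obtain ⟨K, hK, hKH⟩ := h
  have := hK.to_subtype
  have : Finite (T ⧸ H) :=
    Finite.of_surjective (fun k : K => (QuotientGroup.mk (k : T)⁻¹ : T ⧸ H)) fun q => by
      induction q using QuotientGroup.induction_on with | H t => ?_
      obtain ⟨k, hk, hkt⟩ := hKH t
      exact ⟨⟨k, hk⟩, QuotientGroup.eq.2 (by simpa using hkt)⟩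
  exact Subgroup.finiteIndex_of_finite_quotient

lemma finite_orbit_of_finiteIndex {x : X} [(stabilizer T x).FiniteIndex] : (orbit T x).Finite :=
  finite_coe_iff.1 (Finite.of_equiv _ (orbitEquivQuotientStabilizer T x).symm)

lemma exists_notMem_forall_smul_eq [Infinite T] {ι : Type*} [Finite ι] {q : ι → X}
    (hq : ∀ i, (stabilizer T (q i)).FiniteIndex) {A : Set T} (hA : A.Finite) :
    ∃ s ∉ A, ∀ i, s • q i = q i := by
  set H := ⨅ i, stabilizer T (q i)
  have : H.FiniteIndex := Subgroup.finiteIndex_iInf hq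
  have hH : (H : Set T).Infinite := fun hfin =>
    have := hfin.to_subtype
    have := Finite.of_subgroup_quotient H
    not_finite T
  obtain ⟨s, hsH, hsA⟩ := (hH.sdiff hA).nonempty
  exact ⟨s, hsA, fun i => Subgroup.mem_iInf.1 hsH i⟩

lemma exists_smul_inter_inter_orbit_nonempty {H : Subgroup T} {z : X} {U V : Set X}
    (hU : (U ∩ orbit H z).Nonempty) (hV : (V ∩ orbit H z).Nonempty) :
    ∃ h ∈ H, (h • U ∩ V ∩ orbit H z).Nonempty := by
  obtain ⟨_, hU, h₁, rfl⟩ := hU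
  obtain ⟨_, hV, h₂, rfl⟩ := hV
  refine ⟨h₂ * h₁⁻¹, (h₂ * h₁⁻¹).2, h₂ • z, ⟨⟨h₁ • z, hU, ?_⟩, hV⟩, mem_orbit z h₂⟩
  simp [Subgroup.smul_def, smul_smul]

variable [TopologicalSpace X] [ContinuousConstSMul T X]

lemma iUnion_out_smul_closure_orbit_eq_univ (H : Subgroup T) [H.FiniteIndex] {z : X}
    (hz : Dense (orbit T z)) : ⋃ q : T ⧸ H, q.out • closure (orbit H z) = univ := by
  refine eq_univ_of_univ_subset (hz.closure_eq ▸ closure_minimal ?_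
    (isClosed_iUnion_of_finite fun q => isClosed_closure.smul _))
  rintro _ ⟨t, rfl⟩
  obtain ⟨h, hh⟩ := QuotientGroup.mk_out_eq_mul H t
  refine mem_iUnion.2 ⟨t, h⁻¹ • z, subset_closure (mem_orbit z h⁻¹), ?_⟩
  simp [hh, Subgroup.smul_def, smul_smul]

lemma nonempty_interior_closure_orbit [BaireSpace X] [Nonempty X] (H : Subgroup T)
    [H.FiniteIndex] {z : X} (hz : Dense (orbit T z)) :
    (interior (closure (orbit H z))).Nonempty := by
  obtain ⟨q, hq⟩ := nonempty_interior_of_iUnion_of_closed (fun q => isClosed_closure.smul _)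
    (iUnion_out_smul_closure_orbit_eq_univ H hz)
  rw [interior_smul] at hq
  exact smul_set_nonempty.1 hq

lemma exists_smul_mem_closure_orbit (H : Subgroup T) [H.FiniteIndex] {z : X}
    (hz : Dense (orbit T z)) (x : X) : ∃ g : T, g • x ∈ closure (orbit H z) := by
  obtain ⟨q, hq⟩ := mem_iUnion.1 ((iUnion_out_smul_closure_orbit_eq_univ H hz).symm ▸ mem_univ x)
  exact ⟨q.out⁻¹, mem_smul_set_iff_inv_smul_mem.1 hq⟩

lemma perfectSpace_of_dense_syndetic [T1Space X] [IsTopologicallyTransitive T X]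
    (hper : Dense {x : X | SyndeticDiscrete {t : T | t • x = x}})
    (hnonmin : ∃ x : X, ¬ Dense (orbit T x)) : PerfectSpace X := by
  refine perfectSpace_iff_forall_not_isolated.2 fun x => ⟨fun hx => ?_⟩
  have hxo : IsOpen {x} := (isOpen_singleton_iff_punctured_nhds x).2 hx
  obtain ⟨_, hy, hxper⟩ := hper.inter_open_nonempty {x} hxo (singleton_nonempty x)
  rw [mem_singleton_iff.1 hy] at hxper
  have := SyndeticDiscrete.finiteIndex (H := stabilizer T x) hxper
  have horbit : orbit T x = univ := by
    rw [← (dense_orbit_of_isOpen_singleton T hxo).closure_eq,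
      finite_orbit_of_finiteIndex.isClosed.closure_eq]
  obtain ⟨w, hw⟩ := hnonmin
  obtain ⟨g, rfl⟩ : w ∈ orbit T x := horbit ▸ mem_univ w
  exact hw (dense_orbit_of_isOpen_singleton T (by simpa [smul_set_singleton] using hxo.smul g))

end GroupAction

section CommGroupAction

variable {T X : Type*} [CommGroup T] [TopologicalSpace X] [MulAction T X]
  [ContinuousConstSMul T X] {H : Subgroup T} {z p : X}

lemma exists_smul_inter_nonempty_forall (hp : p ∈ closure (orbit H z))
    (hfix : H ≤ stabilizer T p) {ι : Type*} {U : ι → Set X} (hU : ∀ i, IsOpen (U i))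
    (hUz : ∀ i, (U i ∩ orbit H z).Nonempty) (s : Finset ι) :
    ∀ V N : Set X, IsOpen V → (V ∩ orbit H z).Nonempty → IsOpen N → p ∈ N →
      ∃ t ∈ H, (t • V ∩ N).Nonempty ∧ ∀ i ∈ s, (t • U i ∩ N).Nonempty := by
  classical
  induction s using Finset.induction_on with
  | empty =>
    intro V N _ hVz hN hpN
    obtain ⟨t, ht, y, hy, -⟩ :=
      exists_smul_inter_inter_orbit_nonempty hVz (mem_closure_iff.1 hp N hN hpN)
    exact ⟨t, ht, ⟨y, hy⟩, by simp⟩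
  | insert a s _ ih =>
    intro V N hV hVz hN hpN
    obtain ⟨u, hu, hV'⟩ := exists_smul_inter_inter_orbit_nonempty (hUz a) hVz
    have hpuN : p ∈ u • N := by
      rw [← mem_stabilizer_iff.1 (hfix hu)]
      exact smul_mem_smul_set hpN
    -- If `t` sends `u • x ∈ u • U a ∩ V` into `N ∩ u • N`, then by commutativity it also sends
    -- `x ∈ U a` into `N`.
    obtain ⟨t, ht, ⟨_, ⟨w, ⟨⟨x, hx, rfl⟩, hwV⟩, rfl⟩, hN', hN''⟩, hs⟩ :=
      ih (u • U a ∩ V) (N ∩ u • N) (((hU a).smul u).inter hV) hV' (hN.inter (hN.smul u))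
        ⟨hpN, hpuN⟩
    refine ⟨t, ht, ⟨_, smul_mem_smul_set hwV, hN'⟩, fun i hi => ?_⟩
    rcases Finset.mem_insert.1 hi with rfl | hi
    · refine ⟨t • x, smul_mem_smul_set hx, ?_⟩
      rw [← smul_mem_smul_set_iff (a := u), smul_comm]
      exact hN''
    · exact (hs i hi).mono (inter_subset_inter_right _ inter_subset_left)

end CommGroupAction

section ProximalRecurrence

def IsProximalRecurrent {T X : Type*} [SMul T X] [Dist X] (p : X) (A : Set T) (ε : ℝ)
    (S : Set X) : Prop :=
  ∃ t : T, ∃ s ∉ A, ∀ x ∈ S, dist (t • x) p < ε ∧ dist (s • x) x < ε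

lemma IsProximalRecurrent.antitone {T X : Type*} [SMul T X] [Dist X] {p : X} {A : Set T}
    {ε : ℝ} : Antitone (IsProximalRecurrent p A ε) :=
  fun _ _ hSS' ⟨t, s, hs, h⟩ => ⟨t, s, hs, fun x hx => h x (hSS' hx)⟩

lemma finitelyShrinkable_isProximalRecurrent {T X : Type*} [CommGroup T] [MetricSpace X]
    [MulAction T X] [ContinuousConstSMul T X] [Infinite T]
    (hper : Dense {x : X | SyndeticDiscrete {t : T | t • x = x}}) {H : Subgroup T} {z p : X}
    (hp : p ∈ closure (orbit H z)) (hfix : H ≤ stabilizer T p) {A : Set T} (hA : A.Finite)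
    {ε : ℝ} (hε : 0 < ε) :
    FinitelyShrinkable (closure (orbit H z)) (IsProximalRecurrent p A ε) := by
  intro ι _ U hU
  have := Fintype.ofFinite ι
  obtain ⟨t, -, -, ht⟩ := exists_smul_inter_nonempty_forall hp hfix (fun i => (hU i).1)
    (fun i => let ⟨x, hx⟩ := (hU i).2.1; mem_closure_iff.1 ((hU i).2.2 hx) _ (hU i).1 hx)
    Finset.univ univ (ball p ε) isOpen_univ ⟨z, trivial, mem_orbit_self z⟩ isOpen_ball
    (mem_ball_self hε)
  have hq (i : ι) : ∃ q ∈ U i ∩ (t • ·) ⁻¹' ball p ε, SyndeticDiscrete {r : T | r • q = q} := by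
    obtain ⟨_, ⟨x, hx, rfl⟩, htx⟩ := ht i (Finset.mem_univ i)
    exact hper.inter_open_nonempty _ ((hU i).1.inter (isOpen_ball.preimage
      (continuous_const_smul t))) ⟨x, hx, htx⟩
  choose q hqU hq using hq
  obtain ⟨s, hsA, hs⟩ := exists_notMem_forall_smul_eq
    (fun i => SyndeticDiscrete.finiteIndex (H := stabilizer T (q i)) (hq i)) hA
  refine ⟨fun i => U i ∩ (t • ·) ⁻¹' ball p ε ∩ {x | dist (s • x) x < ε},
    fun i => ⟨?_, ⟨q i, hqU i, by simp [hs i, hε]⟩, inter_subset_left.trans inter_subset_left⟩,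
    t, s, hsA, ?_⟩
  · exact ((hU i).1.inter (isOpen_ball.preimage (continuous_const_smul t))).inter
      (isOpen_lt ((continuous_const_smul s).dist continuous_id) continuous_const)
  · simp only [mem_iUnion]
    rintro x ⟨i, ⟨-, hx⟩, hx'⟩
    exact ⟨hx, hx'⟩

lemma tendsto_of_dist_lt_one_div {α : Type*} [PseudoMetricSpace α] {f : ℕ → α} {a : α}
    (h : ∀ n, dist (f n) a < 1 / (n + 1)) : Tendsto f atTop (𝓝 a) :=
  tendsto_iff_dist_tendsto_zero.2 <|
    squeeze_zero (fun _ => dist_nonneg) (fun n => (h n).le) tendsto_one_div_add_atTop_nhds_zero_nat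

end ProximalRecurrence

theorem discrete_devaney_implies_multidimensional_LiYorke_general
    {T X : Type*} [CommGroup T] [TopologicalSpace T]
    [TopologicalSpace X] [PolishSpace X] [MulAction T X] [ContinuousSMul T X]
    (htrans : ∀ U V : Set X, IsOpen U → U.Nonempty → IsOpen V → V.Nonempty →
      ∃ t : T, ∃ x ∈ U, t • x ∈ V)
    (hper : Dense {x : X | SyndeticDiscrete {t : T | t • x = x}})
    (hnonmin : ∃ x : X, ¬ Dense (MulAction.orbit T x)) :
    ∀ F : ℕ → Set T, (∀ n, (F n).Finite) → Monotone F →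
      ∃ Θ : Set X, ¬ Θ.Countable ∧
        ∀ k : ℕ, 2 ≤ k → ∀ z : Fin k → X, (∀ i, z i ∈ Θ) → Function.Injective z →
          ∃ p : X, ∃ t s : ℕ → T, (∀ n, s n ∉ F n) ∧
            (∀ i, Tendsto (fun n => t n • z i) atTop (𝓝 p)) ∧
            (∀ i, Tendsto (fun n => s n • z i) atTop (𝓝 (z i))) := by
  intro F hF _
  let := TopologicalSpace.upgradeIsCompletelyMetrizable X
  have : IsTopologicallyTransitive T X := ⟨fun hU hU' hV hV' =>
    let ⟨t, x, hx, htx⟩ := htrans _ _ hU hU' hV hV'; ⟨t, t • x, smul_mem_smul_set hx, htx⟩⟩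
  have : Nonempty X := let ⟨x, _⟩ := hnonmin; ⟨x⟩
  have := perfectSpace_of_dense_syndetic hper hnonmin
  obtain ⟨z, hz⟩ := exists_dense_orbit T (X := X)
  have := infinite_of_dense_orbit hz
  obtain ⟨q, hq⟩ := hper.nonempty
  have := SyndeticDiscrete.finiteIndex (H := stabilizer T q) hq
  obtain ⟨g, hg⟩ := exists_smul_mem_closure_orbit (stabilizer T q) hz q
  have hfix : stabilizer T q ≤ stabilizer T (g • q) := fun h hh => by
    rw [mem_stabilizer_iff, smul_comm, mem_stabilizer_iff.1 hh]
  obtain ⟨Θ, hΘ, hrec⟩ := exists_not_countable_of_finitelyShrinkable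
    (nonempty_interior_closure_orbit _ hz) (fun n => IsProximalRecurrent.antitone)
    fun n => finitelyShrinkable_isProximalRecurrent hper hg hfix (hF n) Nat.one_div_pos_of_nat
  choose t s hsF hts using hrec
  exact ⟨Θ, hΘ, fun k _ x hx _ => ⟨g • q, t, s, hsF,
    fun i => tendsto_of_dist_lt_one_div fun n => (hts n (x i) (hx i)).1,
    fun i => tendsto_of_dist_lt_one_div fun n => (hts n (x i) (hx i)).2⟩⟩

/-- Let `(T,X)` be a topological flow on a Polish space `X` with `T` an abelian group
with the discrete topology. If `(T,X)` is Devaney chaotic (topologically transitive,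
dense periodic points, not minimal), then it is multi-dimensional Li-Yorke chaotic. -/
theorem discrete_devaney_implies_multidimensional_LiYorke
    {T X : Type*} [CommGroup T] [TopologicalSpace T] [DiscreteTopology T]
    [TopologicalSpace X] [PolishSpace X] [MulAction T X] [ContinuousSMul T X]
    (htrans : ∀ U V : Set X, IsOpen U → U.Nonempty → IsOpen V → V.Nonempty →
      ∃ t : T, ∃ x ∈ U, t • x ∈ V)
    (hper : Dense {x : X | SyndeticDiscrete {t : T | t • x = x}})
    (hnonmin : ∃ x : X, ¬ Dense (MulAction.orbit T x)) :
    ∀ F : ℕ → Set T, (∀ n, (F n).Finite) → Monotone F →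
      ∃ Θ : Set X, ¬ Θ.Countable ∧
        ∀ k : ℕ, 2 ≤ k → ∀ z : Fin k → X, (∀ i, z i ∈ Θ) → Function.Injective z →
          ∃ p : X, ∃ t s : ℕ → T, (∀ n, s n ∉ F n) ∧
            (∀ i, Tendsto (fun n => t n • z i) atTop (𝓝 p)) ∧
            (∀ i, Tendsto (fun n => s n • z i) atTop (𝓝 (z i))) :=
  discrete_devaney_implies_multidimensional_LiYorke_general htrans hper hnonmin
end

section
/- Let (T,X) be a topological semiflow on a topological space X. If (T,X) is thickly transitive and its almost periodic points are dense in X, then (T,X) is topologically weakly mixing: for any nonempty open sets U₁,V₁,U₂,V₂ ⊆ X one has N_T(U₁,V₁) ∩ N_T(U₂,V₂) ≠ ∅. -/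
open Filter Topology Set

/-- A subset `A` of a topological monoid `T` is *thick* if for every compact `K ⊆ T`
there is `t ∈ T` with `K·t ⊆ A`. -/
def Thick {T : Type*} [Monoid T] [TopologicalSpace T] (A : Set T) : Prop :=
  ∀ K : Set T, IsCompact K → ∃ t : T, ∀ k ∈ K, k * t ∈ A

/-- If a topological semiflow `(T,X)` is thickly transitive and its almost periodic
points are dense in `X`, then it is topologically weakly mixing. -/
theorem thicklyTransitive_denseAP_implies_weaklyMixing
    {T X : Type*} [Monoid T] [TopologicalSpace T] [ContinuousMul T]
    [TopologicalSpace X] [MulAction T X] [ContinuousSMul T X]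
    (hthick : ∀ U V : Set X, IsOpen U → U.Nonempty → IsOpen V → V.Nonempty →
      Thick (HittingTimes T U V))
    (hap : Dense {x : X | ∀ U : Set X, IsOpen U → x ∈ U → Syndetic {t : T | t • x ∈ U}}) :
    ∀ U₁ V₁ U₂ V₂ : Set X, IsOpen U₁ → U₁.Nonempty → IsOpen V₁ → V₁.Nonempty →
      IsOpen U₂ → U₂.Nonempty → IsOpen V₂ → V₂.Nonempty →
      (HittingTimes T U₁ V₁ ∩ HittingTimes T U₂ V₂).Nonempty := by
  intro U₁ V₁ U₂ V₂ hU₁ hU₁n hV₁ hV₁n hU₂ hU₂n hV₂ hV₂n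
  -- Step 1: N(U₂,V₂) is nonempty, via thickness with K = {1}
  obtain ⟨s, hs⟩ := hthick U₂ V₂ hU₂ hU₂n hV₂ hV₂n {1} isCompact_singleton
  have hs1 : s ∈ HittingTimes T U₂ V₂ := by
    have := hs 1 rfl; simpa using this
  obtain ⟨y, hyU, hyV⟩ := hs1
  -- Step 2: W = U₂ ∩ s⁻¹ V₂ is open nonempty
  set W : Set X := U₂ ∩ (fun z => s • z) ⁻¹' V₂ with hW
  have hWopen : IsOpen W := hU₂.inter (hV₂.preimage (continuous_const_smul s))
  have hWne : W.Nonempty := ⟨y, hyU, hyV⟩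
  -- Step 3: pick an almost periodic point x in W
  obtain ⟨x, hxAP, hxW⟩ := hap.exists_mem_open hWopen hWne
  obtain ⟨K, hKc, hK⟩ := hxAP W hWopen hxW
  -- Step 4: K' = s • K is compact and witnesses syndeticity of N(U₂,V₂)
  set K' : Set T := (fun k => s * k) '' K with hK'
  have hK'c : IsCompact K' := hKc.image (continuous_mul_left s)
  have hsynd : ∀ t : T, ∃ k ∈ K', k * t ∈ HittingTimes T U₂ V₂ := by
    intro t
    obtain ⟨k, hkK, hkt⟩ := hK t
    refine ⟨s * k, ⟨k, hkK, rfl⟩, ⟨x, hxW.1, ?_⟩⟩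
    have h1 : (k * t) • x ∈ W := hkt
    have h2 : s • ((k * t) • x) ∈ V₂ := h1.2
    have : (s * k * t) • x = s • ((k * t) • x) := by rw [mul_assoc, mul_smul]
    rw [this]; exact h2
  -- Step 5: thickness of N(U₁,V₁) applied to K'
  obtain ⟨t, ht⟩ := hthick U₁ V₁ hU₁ hU₁n hV₁ hV₁n K' hK'c
  obtain ⟨k, hkK', hk⟩ := hsynd t
  exact ⟨k * t, ht k hkK', hk⟩
end

section
/- Let (T,X) be an IP-transitive topological semiflow on a first countable compact Hausdorff space X which is not a singleton. Then no point of X is a distal point for (T,X); i.e., for every x ∈ X there exists y ≠ x such that (x,y) is a proximal pair. -/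
open Filter Topology Set Uniformity

/-- A subset `A` of a monoid `T` is an *IP-set* if it contains all finite products
`p i₁ * p i₂ * ⋯ * p i_k` (in increasing order of indices) for some sequence `p`. -/
def IsIPSet {T : Type*} [Monoid T] (A : Set T) : Prop :=
  ∃ p : ℕ → T, ∀ l : List ℕ, l ≠ [] → l.Chain' (· < ·) → (l.map p).prod ∈ A

attribute [local instance] Ultrafilter.mul

section Monoid

variable {T : Type*} [Monoid T]

def IsIPStar (A : Set T) : Prop :=
  ∀ B : Set T, IsIPSet B → (A ∩ B).Nonempty

lemma List.isChain_lt_map_succ {l : List ℕ} (h : l.IsChain (· < ·)) :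
    (l.map (· + 1)).IsChain (· < ·) :=
  List.isChain_map_of_isChain _ (fun _ _ hab => Nat.succ_lt_succ hab) h

lemma Hindman.exists_isChain_prod_eq_of_mem_FP {a : Stream' T} {m : T}
    (h : m ∈ Hindman.FP a) :
    ∃ l : List ℕ, l ≠ [] ∧ l.IsChain (· < ·) ∧ (l.map a.get).prod = m := by
  have map_succ (a : Stream' T) (l : List ℕ) :
      (l.map (· + 1)).map a.get = l.map a.tail.get := by
    rw [List.map_map]
    rfl
  induction h with
  | head' a => exact ⟨[0], by simp, by simp, by simp [Stream'.head]⟩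
  | tail' a m _ ih =>
    obtain ⟨l, hne, hchain, rfl⟩ := ih
    exact ⟨l.map (· + 1), by simpa using hne, List.isChain_lt_map_succ hchain,
      by rw [map_succ]⟩
  | cons' a m _ ih =>
    obtain ⟨l, hne, hchain, rfl⟩ := ih
    refine ⟨0 :: l.map (· + 1), by simp, (List.isChain_lt_map_succ hchain).cons ?_, ?_⟩
    · simp
    · rw [List.map_cons, List.prod_cons, map_succ]

lemma IsIPSet.exists_FP_subset {A : Set T} (hA : IsIPSet A) :
    ∃ a : Stream' T, Hindman.FP a ⊆ A := by
  obtain ⟨p, hp⟩ := hA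
  refine ⟨p, fun m hm => ?_⟩
  obtain ⟨l, hne, hchain, rfl⟩ := Hindman.exists_isChain_prod_eq_of_mem_FP hm
  exact hp l hne hchain

end Monoid

section Semiflow

variable (T : Type*) {X : Type*} [Monoid T] [MulAction T X]

variable (X) in
def IsIPTransitive [TopologicalSpace X] : Prop :=
  ∀ U V : Set X, IsOpen U → U.Nonempty → IsOpen V → V.Nonempty →
    IsIPSet (HittingTimes T U V)

def IsIPStarRecurrent [TopologicalSpace X] (x : X) : Prop :=
  ∀ V : Set X, IsOpen V → x ∈ V → IsIPStar {t : T | t • x ∈ V}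

def Proximal [UniformSpace X] (x y : X) : Prop :=
  ∀ ε ∈ 𝓤 X, ∃ t : T, (t • x, t • y) ∈ ε

variable {T}

lemma proximal_of_tendsto [UniformSpace X] {ι : Type*} {F : Filter ι} [F.NeBot] {t : ι → T}
    {x y z : X} (hx : Tendsto (fun i => t i • x) F (𝓝 z))
    (hy : Tendsto (fun i => t i • y) F (𝓝 z)) :
    Proximal T x y := fun _ hε =>
  let ⟨i, hi⟩ := ((hx.prodMk_nhds hy).eventually (nhds_le_uniformity z hε)).exists
  ⟨t i, hi⟩

lemma Ultrafilter.tendsto_smul_of_mul_self_eq [TopologicalSpace X] [RegularSpace X]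
    [TopologicalSpace T] [ContinuousConstSMul T X] {U : Ultrafilter T} (hU : U * U = U)
    {x y : X} (hy : Tendsto (· • x) (U : Filter T) (𝓝 y)) :
    Tendsto (· • y) (U : Filter T) (𝓝 y) := by
  rw [(closed_nhds_basis y).tendsto_right_iff]
  rintro C ⟨hC, hCclosed⟩
  have hUU : ∀ᶠ t in ((U * U : Ultrafilter T) : Filter T), t • x ∈ C := by
    rw [hU]
    exact hy hC
  filter_upwards [(U.eventually_mul U _).1 hUU] with t ht
  refine hCclosed.mem_of_tendsto (((continuous_const_smul t).tendsto y).comp hy) ?_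
  filter_upwards [ht] with r hr
  rwa [Function.comp_apply, ← mul_smul]

lemma exists_ne_proximal_of_not_isIPStarRecurrent [UniformSpace X] [CompactSpace X]
    [TopologicalSpace T] [ContinuousConstSMul T X] {x : X} (hx : ¬ IsIPStarRecurrent T x) :
    ∃ y, y ≠ x ∧ Proximal T x y := by
  simp only [IsIPStarRecurrent, IsIPStar, not_forall, not_nonempty_iff_eq_empty] at hx
  obtain ⟨V, hV, hxV, B, hB, hdisj⟩ := hx
  obtain ⟨a, haB⟩ := hB.exists_FP_subset
  obtain ⟨U, hU, haU⟩ := Hindman.exists_idempotent_ultrafilter_le_FP a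
  have hleave : ∀ᶠ t in (U : Filter T), t • x ∉ V := by
    filter_upwards [haU] with t ht htx
    exact hdisj.subset ⟨htx, haB ht⟩
  obtain ⟨y, -, hy⟩ := isCompact_univ.ultrafilter_le_nhds' (U.map (· • x)) univ_mem
  have hyV : y ∉ V := hV.isClosed_compl.mem_of_tendsto hy hleave
  exact ⟨y, fun h => hyV (h ▸ hxV), proximal_of_tendsto (t := id) hy
    (Ultrafilter.tendsto_smul_of_mul_self_eq hU hy)⟩

lemma isOpen_setOf_exists_smul_mem_and_smul_mem [TopologicalSpace X] [TopologicalSpace T]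
    [ContinuousConstSMul T X] {V : Set X} (hV : IsOpen V) (x : X) :
    IsOpen {y : X | ∃ t : T, t • x ∈ V ∧ t • y ∈ V} := by
  simp only [ofPred_exists, ofPred_and]
  exact isOpen_iUnion fun t => isOpen_const.inter (hV.preimage (continuous_const_smul t))

lemma dense_setOf_exists_smul_mem_and_smul_mem [TopologicalSpace X]
    (hip : IsIPTransitive T X) {x : X} {V : Set X} (hV : IsOpen V) (hxV : x ∈ V)
    (hrec : IsIPStar {t : T | t • x ∈ V}) :
    Dense {y : X | ∃ t : T, t • x ∈ V ∧ t • y ∈ V} := by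
  refine dense_iff_inter_open.2 fun U hU hUne => ?_
  obtain ⟨t, htx, y, hyU, hty⟩ := hrec _ (hip U V hU hUne hV ⟨x, hxV⟩)
  exact ⟨y, hyU, t, htx, hty⟩

lemma exists_ne_proximal_of_isIPStarRecurrent [UniformSpace X] [FirstCountableTopology X]
    [BaireSpace X] [T1Space X] [Nontrivial X] [TopologicalSpace T] [ContinuousConstSMul T X]
    (hip : IsIPTransitive T X) {x : X} (hx : IsIPStarRecurrent T x) :
    ∃ y, y ≠ x ∧ Proximal T x y := by
  obtain ⟨W, hW⟩ := (𝓝 x).exists_antitone_basis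
  have hxW (n : ℕ) : x ∈ interior (W n) := mem_interior_iff_mem_nhds.2 (hW.mem n)
  have hdense : Dense (⋂ n,
      {y : X | ∃ t : T, t • x ∈ interior (W n) ∧ t • y ∈ interior (W n)}) :=
    dense_iInter_of_isOpen_nat
      (fun n => isOpen_setOf_exists_smul_mem_and_smul_mem isOpen_interior x)
      (fun n => dense_setOf_exists_smul_mem_and_smul_mem hip isOpen_interior (hxW n)
        (hx _ isOpen_interior (hxW n)))
  obtain ⟨y, hyx, hy⟩ := hdense.inter_open_nonempty {x}ᶜ isOpen_compl_singleton (exists_ne x)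
  choose t ht using mem_iInter.1 hy
  exact ⟨y, hyx, proximal_of_tendsto (hW.tendsto fun n => interior_subset (ht n).1)
    (hW.tendsto fun n => interior_subset (ht n).2)⟩

end Semiflow

theorem ipTransitive_no_distal_point_general
    {T X : Type*} [Monoid T] [TopologicalSpace T]
    [UniformSpace X] [CompactSpace X] [T2Space X] [FirstCountableTopology X]
    [MulAction T X] [ContinuousSMul T X]
    (hnontriv : ∃ a b : X, a ≠ b)
    (hip : ∀ U V : Set X, IsOpen U → U.Nonempty → IsOpen V → V.Nonempty →
      IsIPSet (HittingTimes T U V)) :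
    ∀ x : X, ∃ y : X, y ≠ x ∧ ∀ ε ∈ 𝓤 X, ∃ t : T, (t • x, t • y) ∈ ε := by
  have : Nontrivial X := ⟨hnontriv⟩
  intro x
  by_cases hx : IsIPStarRecurrent T x
  · exact exists_ne_proximal_of_isIPStarRecurrent hip hx
  · exact exists_ne_proximal_of_not_isIPStarRecurrent hx

/-- An IP-transitive topological semiflow on a first countable compact Hausdorff space
with at least two points has no distal points: for every `x ∈ X` there is `y ≠ x`
proximal to `x`. -/
theorem ipTransitive_no_distal_point
    {T X : Type*} [Monoid T] [TopologicalSpace T] [ContinuousMul T]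
    [UniformSpace X] [CompactSpace X] [T2Space X] [FirstCountableTopology X]
    [MulAction T X] [ContinuousSMul T X]
    (hnontriv : ∃ a b : X, a ≠ b)
    (hip : ∀ U V : Set X, IsOpen U → U.Nonempty → IsOpen V → V.Nonempty →
      IsIPSet (HittingTimes T U V)) :
    ∀ x : X, ∃ y : X, y ≠ x ∧ ∀ ε ∈ 𝓤 X, ∃ t : T, (t • x, t • y) ∈ ε :=
  ipTransitive_no_distal_point_general hnontriv hip
end

section
/- Let (T,X) be a minimal topologically weakly mixing flow on a compact metric space X having at least two points, with T an abelian topological group. Then (T,X) is densely multi-dimensional Li-Yorke chaotic: for every increasing sequence F₁ ⊆ F₂ ⊆ ⋯ of compact subsets of T there exists a dense uncountable set Θ ⊆ X such that for every k ≥ 2 and all pairwise distinct x₁,…,x_k ∈ Θ there exist a point p ∈ X and sequences (t_n), (s_n) in T with s_n ∉ F_n for all n, such that t_n•x_i → p for each i and s_n•x_i → x_i for each i, as n → ∞. -/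
/-!
For a compact `F ⊆ T`, a point `c` and `ε > 0`, two sets of `k`-tuples are open and dense in
`X^k`: the tuples that a single `t` moves into the `ε`-ball around `c`, and the tuples with a
common `ε`-return time outside `F`. The first is dense because weak mixing of an abelian action
makes every finite power `X^k` transitive (the hitting-time sets form a filter base). The second
is dense because weak mixing forces `T` to be non-compact, and then minimality yields return times
outside every compact set.

A Mycielski-type Cantor scheme then produces a dense uncountable `Θ` whose injective tuples lie
in countably many prescribed open dense sets: on top of a countable base of `X` we plant binary
trees of open cells, one more tree per level, and at each level shrink all cells at once so that
every tuple of distinct cells lies in the finitely many dense open sets required so far (one of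
them being the set of injective tuples, which keeps the branches apart). With `ε = 1/(n+1)` and
`F = F n` this yields `t n` and `s n`.
-/

open Filter Topology Set Function
open scoped Pointwise

theorem exists_mem_pi_comp_eq {ι κ X : Type*} {V : κ → Set X} (hV : ∀ j, (V j).Nonempty)
    {ν : ι → κ} (hν : Injective ν) {z : ι → X} (hz : ∀ a, z a ∈ V (ν a)) :
    ∃ x ∈ univ.pi V, x ∘ ν = z := by
  classical
  refine ⟨extend ν z fun j => (hV j).some, fun j _ => ?_, extend_comp hν _ _⟩
  by_cases hj : ∃ a, ν a = j
  · obtain ⟨a, rfl⟩ := hj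
    rw [hν.extend_apply]
    exact hz a
  · rw [extend_apply' _ _ _ hj]
    exact (hV j).some_mem

theorem setOf_injective_eq_iInter {ι X : Type*} :
    {x : ι → X | Injective x} = ⋂ p : {p : ι × ι // p.1 ≠ p.2}, {x | x p.1.1 ≠ x p.1.2} := by
  ext x
  simp [injective_iff_pairwise_ne, Pairwise]

section Tuples

variable {X : Type*} [TopologicalSpace X]

theorem dense_iInter_of_isOpen_of_finite {ι : Type*} [Finite ι] {f : ι → Set X}
    (ho : ∀ i, IsOpen (f i)) (hd : ∀ i, Dense (f i)) : Dense (⋂ i, f i) :=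
  sInter_range f ▸ (finite_range f).dense_sInter (forall_mem_range.2 ho) (forall_mem_range.2 hd)

theorem Dense.preimage_comp_of_injective {ι κ : Type*} [Finite κ] {G : Set (ι → X)}
    (hG : Dense G) {ν : ι → κ} (hν : Injective ν) : Dense ((· ∘ ν) ⁻¹' G) := by
  have : Finite ι := .of_injective ν hν
  refine dense_iff_inter_open.2 fun U hU ⟨x, hx⟩ => ?_
  obtain ⟨u, hu, hxu⟩ := isOpen_pi_iff'.1 hU x hx
  obtain ⟨z, hz, hzG⟩ := hG.inter_open_nonempty (univ.pi (u ∘ ν))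
    (isOpen_set_pi finite_univ fun a _ => (hu (ν a)).1) ⟨x ∘ ν, fun a _ => (hu (ν a)).2⟩
  obtain ⟨y, hy, rfl⟩ := exists_mem_pi_comp_eq (fun j => ⟨x j, (hu j).2⟩) hν fun a => hz a trivial
  exact ⟨y, hxu hy, hzG⟩

theorem isOpen_setOf_injective [T2Space X] {ι : Type*} [Finite ι] :
    IsOpen {x : ι → X | Injective x} := by
  rw [setOf_injective_eq_iInter]
  exact isOpen_iInter_of_finite fun p => isOpen_ne_fun (continuous_apply _) (continuous_apply _)

theorem dense_setOf_apply_ne [PerfectSpace X] {ι : Type*} [DecidableEq ι] {i j : ι} (hij : i ≠ j) :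
    Dense {x : ι → X | x i ≠ x j} := by
  refine dense_iff_inter_open.2 fun U hU ⟨x, hx⟩ => ?_
  by_cases hxij : x i ≠ x j
  · exact ⟨x, hx, hxij⟩
  have hU' : update x i ⁻¹' U ∈ 𝓝 (x i) :=
    (hU.preimage (continuous_const.update i continuous_id)).mem_nhds (by simpa using hx)
  obtain ⟨y, hyU, hy⟩ := ((eventually_nhdsWithin_of_eventually_nhds hU').and
    (self_mem_nhdsWithin : {x i}ᶜ ∈ 𝓝[≠] x i)).exists
  refine ⟨update x i y, hyU, ?_⟩
  simpa [update_of_ne hij.symm, ← not_not.1 hxij] using hy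

theorem dense_setOf_injective [PerfectSpace X] [T2Space X] {ι : Type*} [Finite ι] :
    Dense {x : ι → X | Injective x} := by
  classical
  rw [setOf_injective_eq_iInter]
  exact dense_iInter_of_isOpen_of_finite
    (fun p => isOpen_ne_fun (continuous_apply _) (continuous_apply _))
    fun p => dense_setOf_apply_ne p.2

theorem exists_closure_subset_and_pi_subset [RegularSpace X] {J : Type*} [Finite J]
    {E : J → Set X} (hEo : ∀ j, IsOpen (E j)) (hEne : ∀ j, (E j).Nonempty) {G : Set (J → X)}
    (hGo : IsOpen G) (hGd : Dense G) :
    ∃ V : J → Set X, (∀ j, IsOpen (V j) ∧ (V j).Nonempty ∧ closure (V j) ⊆ E j) ∧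
      univ.pi V ⊆ G := by
  obtain ⟨x, hxE, hxG⟩ := hGd.inter_open_nonempty _
    (isOpen_set_pi finite_univ fun j _ => hEo j) (univ_pi_nonempty_iff.2 hEne)
  obtain ⟨u, hu, hxu⟩ := isOpen_pi_iff'.1 hGo x hxG
  have hshrink : ∀ j, ∃ V, IsOpen V ∧ x j ∈ V ∧ closure V ⊆ u j ∩ E j := fun j => by
    have hxj : u j ∩ E j ∈ 𝓝ˢ {x j} := by
      rw [nhdsSet_singleton]
      exact ((hu j).1.inter (hEo j)).mem_nhds ⟨(hu j).2, hxE j trivial⟩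
    simpa using isCompact_singleton.exists_isOpen_closure_subset hxj
  choose V hVo hxV hVu using hshrink
  exact ⟨V, fun j => ⟨hVo j, ⟨x j, hxV j⟩, (hVu j).trans inter_subset_right⟩,
    fun y hy => hxu fun j _ => (hVu j).trans inter_subset_left (subset_closure (hy j trivial))⟩

end Tuples

namespace Mycielski

/-- A cell of level `n` is indexed by `(m, σ)`: `m` names the target open set `W m` inside which
its tree was planted at level `m + 1`, and `σ` is a binary branch. -/
abbrev Index (n : ℕ) := Fin n × (Fin n → Bool)

variable {X : Type*} [TopologicalSpace X] {W : ℕ → Set X} {G : ℕ → ∀ k, Set (Fin k → X)}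

def goodTuples (G : ℕ → ∀ k, Set (Fin k → X)) (n : ℕ) : Set (Index n → X) :=
  {x | Injective x} ∩ ⋂ c : Fin n × Σ k : Fin n, Fin k ↪ Index n, (· ∘ c.2.2) ⁻¹' G c.1 c.2.1

structure IsLevel (W : ℕ → Set X) (G : ℕ → ∀ k, Set (Fin k → X)) (n : ℕ)
    (V : Index n → Set X) : Prop where
  isOpen : ∀ j, IsOpen (V j)
  nonempty : ∀ j, (V j).Nonempty
  subset : ∀ j, V j ⊆ W j.1
  pi_subset : univ.pi V ⊆ goodTuples G n

def Refines {n : ℕ} (V : Index n → Set X) (V' : Index (n + 1) → Set X) : Prop :=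
  ∀ m σ, closure (V' (m.castSucc, σ)) ⊆ V (m, Fin.init σ)

theorem isLevel_zero : IsLevel W G 0 fun _ => univ :=
  ⟨fun j => j.1.elim0, fun j => j.1.elim0, fun j => j.1.elim0,
    fun _ _ => ⟨injective_of_subsingleton _, mem_iInter.2 fun c => c.1.elim0⟩⟩

def IsScheme (W : ℕ → Set X) (G : ℕ → ∀ k, Set (Fin k → X)) (V : ∀ n, Index n → Set X) :
    Prop :=
  ∀ n, IsLevel W G n (V n) ∧ Refines (V n) (V (n + 1))

theorem IsScheme.exists_forall_mem [CompactSpace X] {V : ∀ n, Index n → Set X}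
    (hV : IsScheme W G V) (m : ℕ) (α : ℕ → Bool) :
    ∃ x, ∀ N (h : m < N), x ∈ V N (⟨m, h⟩, fun i => α i) := by
  let K : ℕ → Set X := fun j => closure (V (m + j + 1) (⟨m, by omega⟩, fun i => α i))
  obtain ⟨x, hx⟩ := IsCompact.nonempty_iInter_of_sequence_nonempty_isCompact_isClosed K
    (fun j => (hV _).2 ⟨m, by omega⟩ _ |>.trans subset_closure)
    (fun j => ((hV _).1.nonempty _).mono subset_closure) isClosed_closure.isCompact
    fun _ => isClosed_closure
  refine ⟨x, fun N h => ?_⟩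
  obtain ⟨j, rfl⟩ := Nat.exists_eq_add_of_lt h
  exact (hV _).2 ⟨m, h⟩ _ (mem_iInter.1 hx (j + 1))

theorem eventually_injective_restrict {ι : Type*} [Finite ι] {p : ι → ℕ × (ℕ → Bool)}
    (hp : Injective p) :
    ∀ᶠ N in atTop, Injective fun a => ((p a).1, fun i : Fin N => (p a).2 i) := by
  have hpair : ∀ a b, ∀ᶠ N in atTop,
      ((p a).1, fun i : Fin N => (p a).2 i) = ((p b).1, fun i : Fin N => (p b).2 i) →
        a = b := by
    intro a b
    by_cases h₂ : (p a).2 = (p b).2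
    · exact .of_forall fun N h => hp (Prod.ext (Prod.ext_iff.1 h).1 h₂)
    obtain ⟨i, hi⟩ := ne_iff.1 h₂
    filter_upwards [eventually_gt_atTop i] with N hN h
    exact absurd (congrFun (Prod.ext_iff.1 h).2 ⟨i, hN⟩) hi
  filter_upwards [eventually_all.2 fun a => eventually_all.2 (hpair a)] with N hN a b h
  exact hN a b h

theorem IsScheme.injective_and_mem_of_injective {V : ∀ n, Index n → Set X}
    (hV : IsScheme W G V) {θ : ℕ → (ℕ → Bool) → X}
    (hθ : ∀ m α N (h : m < N), θ m α ∈ V N (⟨m, h⟩, fun i => α i)) {k : ℕ}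
    {p : Fin k → ℕ × (ℕ → Bool)} (hp : Injective p) (q : ℕ) :
    Injective (fun a => θ (p a).1 (p a).2) ∧ (fun a => θ (p a).1 (p a).2) ∈ G q k := by
  obtain ⟨N, hinj, hlt, hqN, hkN⟩ := ((eventually_injective_restrict hp).and
    ((eventually_all.2 fun a => eventually_gt_atTop (p a).1).and
      ((eventually_gt_atTop q).and (eventually_gt_atTop k)))).exists
  let ν : Fin k ↪ Index N := ⟨fun a => (⟨(p a).1, hlt a⟩, fun i => (p a).2 i), fun a b h =>
    hinj (Prod.ext (Fin.ext_iff.1 (Prod.ext_iff.1 h).1) (Prod.ext_iff.1 h).2)⟩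
  obtain ⟨x, hx, hxν⟩ := exists_mem_pi_comp_eq (hV N).1.nonempty ν.injective
    fun a => hθ _ _ N (hlt a)
  obtain ⟨hxinj, hxG⟩ := (hV N).1.pi_subset hx
  rw [← hxν]
  exact ⟨hxinj.comp ν.injective,
    mem_iInter.1 hxG (⟨q, hqN⟩, (⟨⟨k, hkN⟩, ν⟩ : Σ k : Fin N, Fin k ↪ Index N))⟩

section Construction

variable [T2Space X]

theorem isOpen_goodTuples (hGo : ∀ q k, IsOpen (G q k)) (n : ℕ) : IsOpen (goodTuples G n) :=
  isOpen_setOf_injective.inter <| isOpen_iInter_of_finite fun _ =>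
    (hGo _ _).preimage (continuous_pi fun _ => continuous_apply _)

theorem dense_goodTuples [PerfectSpace X] (hGo : ∀ q k, IsOpen (G q k))
    (hGd : ∀ q k, Dense (G q k)) (n : ℕ) : Dense (goodTuples G n) :=
  dense_setOf_injective.inter_of_isOpen_left
    (dense_iInter_of_isOpen_of_finite
      (fun _ => (hGo _ _).preimage (continuous_pi fun _ => continuous_apply _))
      fun c => (hGd _ _).preimage_comp_of_injective c.2.2.injective)
    isOpen_setOf_injective

theorem IsLevel.exists_refines [RegularSpace X] [PerfectSpace X] (hWo : ∀ m, IsOpen (W m))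
    (hWne : ∀ m, (W m).Nonempty) (hGo : ∀ q k, IsOpen (G q k)) (hGd : ∀ q k, Dense (G q k))
    {n : ℕ} {V : Index n → Set X} (hV : IsLevel W G n V) :
    ∃ V', IsLevel W G (n + 1) V' ∧ Refines V V' := by
  let E : Index (n + 1) → Set X := fun j =>
    Fin.lastCases (motive := fun _ => Set X) (W n) (fun m => V (m, Fin.init j.2)) j.1
  have hE : ∀ j, IsOpen (E j) ∧ (E j).Nonempty ∧ E j ⊆ W j.1 := by
    rintro ⟨m, σ⟩
    induction m using Fin.lastCases with
    | last => simpa [E] using ⟨hWo n, hWne n⟩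
    | cast m => simpa [E] using ⟨hV.isOpen _, hV.nonempty _, hV.subset _⟩
  obtain ⟨V', hV', hV'G⟩ := exists_closure_subset_and_pi_subset (fun j => (hE j).1)
    (fun j => (hE j).2.1) (isOpen_goodTuples hGo _) (dense_goodTuples hGo hGd _)
  refine ⟨V', ⟨fun j => (hV' j).1, fun j => (hV' j).2.1,
    fun j => subset_closure.trans ((hV' j).2.2.trans (hE j).2.2), hV'G⟩, fun m σ => ?_⟩
  simpa [E] using (hV' (m.castSucc, σ)).2.2

theorem exists_isScheme [RegularSpace X] [PerfectSpace X] (hWo : ∀ m, IsOpen (W m))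
    (hWne : ∀ m, (W m).Nonempty) (hGo : ∀ q k, IsOpen (G q k)) (hGd : ∀ q k, Dense (G q k)) :
    ∃ V, IsScheme W G V := by
  have step : ∀ n (V : Index n → Set X), ∃ V' : Index (n + 1) → Set X,
      IsLevel W G n V → IsLevel W G (n + 1) V' ∧ Refines V V' := fun n V => by
    by_cases hV : IsLevel W G n V
    · obtain ⟨V', hV'⟩ := hV.exists_refines hWo hWne hGo hGd
      exact ⟨V', fun _ => hV'⟩
    · exact ⟨fun _ => ∅, fun h => absurd h hV⟩
  choose next hnext using step
  let V : ∀ n, Index n → Set X := fun n => Nat.rec (motive := fun n => Index n → Set X)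
    (fun _ => univ) next n
  have hV : ∀ n, IsLevel W G n (V n) := fun n => by
    induction n with
    | zero => exact isLevel_zero
    | succ n ih => exact (hnext n _ ih).1
  exact ⟨V, fun n => ⟨hV n, (hnext n _ (hV n)).2⟩⟩

end Construction

end Mycielski

instance : Uncountable (ℕ → Bool) :=
  ⟨by simpa [← Cardinal.mk_le_aleph0_iff] using Cardinal.aleph0_lt_continuum⟩

theorem TopologicalSpace.exists_seq_isOpen_nonempty_subset {X : Type*} [TopologicalSpace X]
    [SecondCountableTopology X] [Nonempty X] :
    ∃ W : ℕ → Set X, (∀ m, IsOpen (W m)) ∧ (∀ m, (W m).Nonempty) ∧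
      ∀ U, IsOpen U → U.Nonempty → ∃ m, W m ⊆ U := by
  obtain ⟨b, hbc, hb₀, hb⟩ := exists_countable_basis X
  obtain ⟨v, hv, -⟩ := hb.exists_subset_of_mem_open (mem_univ (Classical.arbitrary X)) isOpen_univ
  obtain ⟨W, rfl⟩ := hbc.exists_eq_range ⟨v, hv⟩
  refine ⟨W, fun m => hb.isOpen (mem_range_self m),
    fun m => nonempty_iff_ne_empty.2 fun h => hb₀ (h ▸ mem_range_self m), fun U hU ⟨x, hx⟩ => ?_⟩
  obtain ⟨_, ⟨m, rfl⟩, -, hmU⟩ := hb.exists_subset_of_mem_open hx hU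
  exact ⟨m, hmU⟩

theorem exists_dense_not_countable_forall_injective_mem {X : Type*} [TopologicalSpace X]
    [CompactSpace X] [T2Space X] [SecondCountableTopology X] [PerfectSpace X] [Nonempty X]
    {G : ℕ → ∀ k, Set (Fin k → X)} (hGo : ∀ q k, IsOpen (G q k)) (hGd : ∀ q k, Dense (G q k)) :
    ∃ Θ : Set X, Dense Θ ∧ ¬ Θ.Countable ∧
      ∀ q k (z : Fin k → X), (∀ i, z i ∈ Θ) → Injective z → z ∈ G q k := by
  obtain ⟨W, hWo, hWne, hW⟩ := TopologicalSpace.exists_seq_isOpen_nonempty_subset (X := X)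
  obtain ⟨V, hV⟩ := Mycielski.exists_isScheme hWo hWne hGo hGd
  choose θ hθ using hV.exists_forall_mem
  have hinj : Injective (θ 0) := fun α β h => by
    by_contra hαβ
    have hp : Injective ![((0 : ℕ), α), (0, β)] := by
      simp [Injective, Fin.forall_fin_two, hαβ, Ne.symm hαβ]
    exact (hV.injective_and_mem_of_injective hθ hp 0).1.ne (by decide : (0 : Fin 2) ≠ 1) h
  refine ⟨range fun p : ℕ × (ℕ → Bool) => θ p.1 p.2,
    dense_iff_inter_open.2 fun U hU hUne => ?_, fun hc => ?_, fun q k z hz hzinj => ?_⟩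
  · obtain ⟨m, hm⟩ := hW U hU hUne
    exact ⟨_, hm ((hV (m + 1)).1.subset _ (hθ m (fun _ => false) (m + 1) m.lt_succ_self)),
      (m, fun _ => false), rfl⟩
  · have := hc.to_subtype
    exact not_countable (Injective.countable (f := fun α => (⟨θ 0 α, (0, α), rfl⟩ :
      range fun p : ℕ × (ℕ → Bool) => θ p.1 p.2)) fun α β h => hinj (congrArg Subtype.val h))
  · choose p hp using hz
    have hpinj : Injective p := fun a b h => hzinj (by rw [← hp a, ← hp b, h])
    simpa only [hp] using (hV.injective_and_mem_of_injective hθ hpinj q).2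

section Dynamics

open MulAction

variable {T X : Type*}

theorem perfectSpace_of_isTopologicallyTransitive_prod [Monoid T] [MulAction T X]
    [TopologicalSpace X] [T1Space X] [Nontrivial X] [IsTopologicallyTransitive T (X × X)] :
    PerfectSpace X := by
  refine perfectSpace_iff_forall_not_isolated.2 fun x => ⟨fun hx => ?_⟩
  have hxo := (isOpen_singleton_iff_punctured_nhds x).2 hx
  obtain ⟨y, hy⟩ := exists_ne x
  obtain ⟨t, _, ⟨w, ⟨hw₁, hw₂⟩, rfl⟩, htw₁, htw₂⟩ :=
    IsTopologicallyTransitive.exists_smul_inter (M := T) (hxo.prod hxo)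
      ⟨(x, x), rfl, rfl⟩ (hxo.prod isOpen_compl_singleton) ⟨(x, y), rfl, hy⟩
  have hw : w.2 = w.1 := (hw₂ : w.2 = x).trans (hw₁ : w.1 = x).symm
  exact htw₂ (by rw [Prod.smul_snd, hw]; exact htw₁)

theorem not_compactSpace_of_isTopologicallyTransitive_prod [TopologicalSpace T] [Monoid T]
    [MulAction T X] [MetricSpace X] [ContinuousSMul T X] [Nontrivial X]
    [IsTopologicallyTransitive T (X × X)] : ¬ CompactSpace T := by
  intro hT
  obtain ⟨a, b, hab⟩ := exists_pair_ne X
  have hd : 0 < dist a b := dist_pos.2 hab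
  -- Compactness of `T` makes the action equicontinuous at the diagonal point `(a, a)`.
  have hequi : ∀ᶠ w : X × X in 𝓝 (a, a), ∀ t ∈ (univ : Set T),
      dist (t • w.1) (t • w.2) < dist a b / 3 :=
    isCompact_univ.eventually_forall_of_forall_eventually fun t _ =>
      ((by fun_prop : Continuous fun z : (X × X) × T => dist (z.2 • z.1.1) (z.2 • z.1.2)).tendsto
        ((a, a), t)).eventually_lt_const (by simpa using div_pos hd three_pos)
  obtain ⟨U, hUequi, hUo, haU⟩ := mem_nhds_iff.1 hequi
  obtain ⟨t, _, ⟨w, hw, rfl⟩, hta, htb⟩ := IsTopologicallyTransitive.exists_smul_inter (M := T)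
    (V := Metric.ball a (dist a b / 3) ×ˢ Metric.ball b (dist a b / 3)) hUo ⟨_, haU⟩
    (Metric.isOpen_ball.prod Metric.isOpen_ball)
    ⟨(a, b), Metric.mem_ball_self (by positivity), Metric.mem_ball_self (by positivity)⟩
  have hta : dist (t • w.1) a < dist a b / 3 := hta
  have htb : dist (t • w.2) b < dist a b / 3 := htb
  linarith [hUequi hw t trivial, dist_triangle4 a (t • w.1) (t • w.2) b, dist_comm a (t • w.1)]

theorem exists_notMem_smul_mem_of_isCompact [Group T] [TopologicalSpace T] [ContinuousMul T]
    [TopologicalSpace X] [CompactSpace X] [MulAction T X] [ContinuousConstSMul T X]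
    [IsMinimal T X] (hT : ¬ CompactSpace T) {F : Set T} (hF : IsCompact F) {U : Set X}
    (hUo : IsOpen U) (hUne : U.Nonempty) (x : X) : ∃ s ∉ F, s • x ∈ U := by
  by_contra! hret
  obtain ⟨I, hI⟩ := isCompact_univ.exists_finite_cover_smul T hUo hUne
  have hcover : (univ : Set T) ⊆ ⋃ g ∈ I, g • F := fun s _ => by
    obtain ⟨g, hg, y, hy, hgy⟩ := mem_iUnion₂.1 (hI (mem_univ (s • x)))
    refine mem_iUnion₂.2 ⟨g, hg, g⁻¹ * s, by_contra fun hsF => hret _ hsF ?_, by simp⟩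
    rwa [mul_smul, ← hgy, inv_smul_smul]
  exact hT (isCompact_univ_iff.1
    ((I.isCompact_biUnion fun g _ => hF.smul g).of_isClosed_subset isClosed_univ hcover))

def hittingTimes (T : Type*) [SMul T X] (U V : Set X) : Set T := {t | ∃ x ∈ U, t • x ∈ V}

section WeakMixing

variable [CommMonoid T] [MulAction T X] [TopologicalSpace X] [ContinuousConstSMul T X]
  [IsTopologicallyTransitive T (X × X)]

theorem exists_hittingTimes_subset_inter {U₁ V₁ U₂ V₂ : Set X} (hU₁ : IsOpen U₁)
    (hU₁' : U₁.Nonempty) (hV₁ : IsOpen V₁) (hV₁' : V₁.Nonempty) (hU₂ : IsOpen U₂)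
    (hU₂' : U₂.Nonempty) (hV₂ : IsOpen V₂) (hV₂' : V₂.Nonempty) :
    ∃ U V : Set X, IsOpen U ∧ U.Nonempty ∧ IsOpen V ∧ V.Nonempty ∧
      hittingTimes T U V ⊆ hittingTimes T U₁ V₁ ∩ hittingTimes T U₂ V₂ := by
  obtain ⟨t, _, ⟨w, ⟨hwU₁, hwV₁⟩, rfl⟩, htwU₂, htwV₂⟩ :=
    IsTopologicallyTransitive.exists_smul_inter (M := T) (hU₁.prod hV₁) (hU₁'.prod hV₁')
      (hU₂.prod hV₂) (hU₂'.prod hV₂')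
  refine ⟨U₁ ∩ (t • ·) ⁻¹' U₂, V₁ ∩ (t • ·) ⁻¹' V₂,
    hU₁.inter (hU₂.preimage (continuous_const_smul t)), ⟨w.1, hwU₁, htwU₂⟩,
    hV₁.inter (hV₂.preimage (continuous_const_smul t)), ⟨w.2, hwV₁, htwV₂⟩, ?_⟩
  rintro s ⟨x, ⟨hxU₁, htxU₂⟩, hsxV₁, hstxV₂⟩
  exact ⟨⟨x, hxU₁, hsxV₁⟩, t • x, htxU₂, by rwa [smul_comm]⟩

theorem exists_hittingTimes_subset_biInter [Nonempty X] {ι : Type*} {U V : ι → Set X}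
    (hUo : ∀ i, IsOpen (U i)) (hUne : ∀ i, (U i).Nonempty) (hVo : ∀ i, IsOpen (V i))
    (hVne : ∀ i, (V i).Nonempty) (s : Finset ι) :
    ∃ U₀ V₀ : Set X, IsOpen U₀ ∧ U₀.Nonempty ∧ IsOpen V₀ ∧ V₀.Nonempty ∧
      hittingTimes T U₀ V₀ ⊆ ⋂ i ∈ s, hittingTimes T (U i) (V i) := by
  classical
  induction s using Finset.induction_on with
  | empty => exact ⟨univ, univ, isOpen_univ, univ_nonempty, isOpen_univ, univ_nonempty, by simp⟩
  | insert i s _ ih =>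
    obtain ⟨U₀, V₀, hU₀, hU₀', hV₀, hV₀', hsub⟩ := ih
    obtain ⟨U₁, V₁, hU₁, hU₁', hV₁, hV₁', hsub₁⟩ :=
      exists_hittingTimes_subset_inter (T := T) (hUo i) (hUne i) (hVo i) (hVne i) hU₀ hU₀' hV₀ hV₀'
    refine ⟨U₁, V₁, hU₁, hU₁', hV₁, hV₁', fun t ht => ?_⟩
    rw [Finset.set_biInter_insert]
    exact ⟨(hsub₁ ht).1, hsub (hsub₁ ht).2⟩

theorem isTopologicallyTransitive_pi [Nonempty X] {ι : Type*} [Finite ι] :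
    IsTopologicallyTransitive T (ι → X) := by
  refine ⟨fun {𝒰 𝒱} h𝒰 ⟨x, hx⟩ h𝒱 ⟨y, hy⟩ => ?_⟩
  obtain ⟨u, hu, hxu⟩ := isOpen_pi_iff'.1 h𝒰 x hx
  obtain ⟨v, hv, hyv⟩ := isOpen_pi_iff'.1 h𝒱 y hy
  cases nonempty_fintype ι
  obtain ⟨U₀, V₀, hU₀, hU₀', hV₀, hV₀', hsub⟩ := exists_hittingTimes_subset_biInter (T := T)
    (fun i => (hu i).1) (fun i => ⟨x i, (hu i).2⟩) (fun i => (hv i).1) (fun i => ⟨y i, (hv i).2⟩)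
    Finset.univ
  obtain ⟨t, _, ⟨z, hz, rfl⟩, htz⟩ := IsTopologicallyTransitive.exists_smul_inter (M := T)
    (U := U₀ ×ˢ (univ : Set X)) (V := V₀ ×ˢ (univ : Set X)) (hU₀.prod isOpen_univ)
    (hU₀'.prod univ_nonempty) (hV₀.prod isOpen_univ) (hV₀'.prod univ_nonempty)
  have ht := hsub ⟨z.1, hz.1, htz.1⟩
  simp only [Finset.mem_univ, iInter_true, mem_iInter] at ht
  choose w hwu hwv using ht
  exact ⟨t, t • w, ⟨w, hxu fun i _ => hwu i, rfl⟩, hyv fun i _ => hwv i⟩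

theorem dense_setOf_exists_forall_smul_mem {ι : Type*} [Finite ι] {O : Set X} (hOo : IsOpen O)
    (hOne : O.Nonempty) : Dense {z : ι → X | ∃ t : T, ∀ i, t • z i ∈ O} := by
  have : Nonempty X := hOne.to_subtype.map Subtype.val
  have := isTopologicallyTransitive_pi (T := T) (X := X) (ι := ι)
  have hOpi : IsOpen (univ.pi fun _ : ι => O) := isOpen_set_pi finite_univ fun _ _ => hOo
  refine (hOpi.dense_iUnion_preimage_smul T (univ_pi_nonempty_iff.2 fun _ => hOne)).mono ?_
  rintro z ⟨_, ⟨t, rfl⟩, hz⟩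
  exact ⟨t, fun i => hz i trivial⟩

end WeakMixing

theorem isOpen_setOf_exists_forall_smul_mem [SMul T X] [TopologicalSpace X]
    [ContinuousConstSMul T X] {ι : Type*} [Finite ι] {O : Set X} (hOo : IsOpen O) :
    IsOpen {z : ι → X | ∃ t : T, ∀ i, t • z i ∈ O} := by
  simp only [ofPred_exists, ofPred_forall]
  exact isOpen_iUnion fun t => isOpen_iInter_of_finite fun i =>
    hOo.preimage ((continuous_const_smul t).comp (continuous_apply i))

theorem isOpen_setOf_exists_notMem_forall_smul_mem_ball [SMul T X] [PseudoMetricSpace X]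
    [ContinuousConstSMul T X] {ι : Type*} [Finite ι] (F : Set T) (ε : ℝ) :
    IsOpen {z : ι → X | ∃ s ∉ F, ∀ i, s • z i ∈ Metric.ball (z i) ε} := by
  have : {z : ι → X | ∃ s ∉ F, ∀ i, s • z i ∈ Metric.ball (z i) ε} =
      ⋃ s ∈ Fᶜ, ⋂ i, {z | dist (s • z i) (z i) < ε} := by
    ext
    simp
  rw [this]
  exact isOpen_biUnion fun s _ => isOpen_iInter_of_finite fun i =>
    isOpen_lt (by fun_prop) continuous_const

theorem dense_setOf_exists_notMem_forall_smul_mem_ball [CommGroup T] [TopologicalSpace T]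
    [ContinuousMul T] [MulAction T X] [PseudoMetricSpace X] [CompactSpace X] [Nonempty X]
    [ContinuousConstSMul T X] [IsMinimal T X] (hT : ¬ CompactSpace T) {F : Set T}
    (hF : IsCompact F) {ε : ℝ} (hε : 0 < ε) {ι : Type*} [Finite ι] :
    Dense {z : ι → X | ∃ s ∉ F, ∀ i, s • z i ∈ Metric.ball (z i) ε} := by
  obtain ⟨c⟩ := ‹Nonempty X›
  refine dense_iff_inter_open.2 fun 𝒰 h𝒰 ⟨y, hy⟩ => ?_
  obtain ⟨u, hu, hyu⟩ := isOpen_pi_iff'.1 h𝒰 y hy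
  choose g hg using fun i => (hu i).1.exists_smul_mem T c ⟨y i, (hu i).2⟩
  obtain ⟨s, hsF, hs⟩ := exists_notMem_smul_mem_of_isCompact hT hF
    (U := ⋂ i, (g i • ·) ⁻¹' Metric.ball (g i • c) ε)
    (isOpen_iInter_of_finite fun i => Metric.isOpen_ball.preimage (continuous_const_smul _))
    ⟨c, mem_iInter.2 fun i => Metric.mem_ball_self hε⟩ c
  refine ⟨fun i => g i • c, hyu fun i _ => hg i, s, hsF, fun i => ?_⟩
  rw [smul_comm]
  exact mem_iInter.1 hs i

end Dynamics

theorem tendsto_of_forall_dist_lt_one_div {X : Type*} [PseudoMetricSpace X] {u : ℕ → X} {a : X}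
    (h : ∀ n, dist (u n) a < 1 / (n + 1)) : Tendsto u atTop (𝓝 a) :=
  tendsto_iff_dist_tendsto_zero.2 <| squeeze_zero (fun _ => dist_nonneg) (fun n => (h n).le)
    tendsto_one_div_add_atTop_nhds_zero_nat

/-- A minimal topologically weakly mixing flow on a compact metric space with at least
two points, with an abelian topological phase group, is densely multi-dimensional
Li-Yorke chaotic. -/
theorem minimal_weaklyMixing_abelian_densely_multidimensional_LiYorke
    {T X : Type*} [CommGroup T] [TopologicalSpace T] [IsTopologicalGroup T]
    [MetricSpace X] [CompactSpace X] [MulAction T X] [ContinuousSMul T X]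
    (hnontriv : ∃ a b : X, a ≠ b)
    (hmin : ∀ x : X, Dense (MulAction.orbit T x))
    (hwm : ∀ W₁ W₂ : Set (X × X), IsOpen W₁ → W₁.Nonempty → IsOpen W₂ → W₂.Nonempty →
      ∃ t : T, ∃ w ∈ W₁, (t • w.1, t • w.2) ∈ W₂) :
    ∀ F : ℕ → Set T, (∀ n, IsCompact (F n)) → Monotone F →
      ∃ Θ : Set X, Dense Θ ∧ ¬ Θ.Countable ∧
        ∀ k : ℕ, 2 ≤ k → ∀ z : Fin k → X, (∀ i, z i ∈ Θ) → Function.Injective z →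
          ∃ p : X, ∃ t s : ℕ → T, (∀ n, s n ∉ F n) ∧
            (∀ i, Tendsto (fun n => t n • z i) atTop (𝓝 p)) ∧
            (∀ i, Tendsto (fun n => s n • z i) atTop (𝓝 (z i))) := by
  intro F hF _
  have : MulAction.IsMinimal T X := ⟨hmin⟩
  have : MulAction.IsTopologicallyTransitive T (X × X) := ⟨fun hU hUne hV hVne =>
    let ⟨t, w, hw, htw⟩ := hwm _ _ hU hUne hV hVne
    ⟨t, t • w, smul_mem_smul_set hw, htw⟩⟩
  have : Nontrivial X := ⟨hnontriv⟩
  have : PerfectSpace X := perfectSpace_of_isTopologicallyTransitive_prod (T := T)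
  have hT := not_compactSpace_of_isTopologicallyTransitive_prod (T := T) (X := X)
  obtain ⟨c, -⟩ := hnontriv
  have hε : ∀ q : ℕ, (0 : ℝ) < 1 / (q + 1) := fun q => by positivity
  obtain ⟨Θ, hΘd, hΘc, hΘ⟩ := exists_dense_not_countable_forall_injective_mem
    (G := fun q k => {z : Fin k → X | ∃ t : T, ∀ i, t • z i ∈ Metric.ball c (1 / (q + 1))} ∩
      {z | ∃ s ∉ F q, ∀ i, s • z i ∈ Metric.ball (z i) (1 / (q + 1))})
    (fun q k => (isOpen_setOf_exists_forall_smul_mem Metric.isOpen_ball).inter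
      (isOpen_setOf_exists_notMem_forall_smul_mem_ball _ _))
    (fun q k => (dense_setOf_exists_forall_smul_mem Metric.isOpen_ball
      (Metric.nonempty_ball.2 (hε q))).inter_of_isOpen_left
      (dense_setOf_exists_notMem_forall_smul_mem_ball hT (hF q) (hε q))
      (isOpen_setOf_exists_forall_smul_mem Metric.isOpen_ball))
  refine ⟨Θ, hΘd, hΘc, fun k _ z hzΘ hz => ?_⟩
  choose t ht using fun q => (hΘ q k z hzΘ hz).1
  choose s hsF hs using fun q => (hΘ q k z hzΘ hz).2
  exact ⟨c, t, s, hsF, fun i => tendsto_of_forall_dist_lt_one_div fun q => ht q i,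
    fun i => tendsto_of_forall_dist_lt_one_div fun q => hs q i⟩
end

section
/- Let (T,X) be a sensitive topological semiflow on a uniform space (X,𝓤) which is a Baire space. Then there exists an entourage ε ∈ 𝓤 (a sensitivity index) such that for every sequence (F_n)_{n≥1} of compact subsets of T and every x ∈ X, the (ε, (F_n))-stable set W = ⋃_{n≥1} ⋂_{t ∈ T \ F_n} {y ∈ X : t•y ∈ closure(ε[t•x])} is meagre (of the first category) in X, where ε[z] = {w ∈ X : (z,w) ∈ ε}. -/
open Filter Topology Set Uniformity

/-!
Choose `δ` so small that two points in the closed `δ`-ball around a common centre are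
`ε`-close, `ε` being the given sensitivity index. Each piece `⋂ t ∉ F, t⁻¹ (closure δ[t • x])`
of the stable set is closed. If it had an interior point `z`, apply sensitivity at `z` inside a
neighbourhood on which the maps `t • ·`, `t ∈ F`, move points `ε`-close to `z` (compactness of `F`):
the separating time `t` can neither lie in `F` nor outside it. So each piece is nowhere dense.
-/

section SensitiveSemiflow

open SetRel UniformSpace

variable {T X : Type*} [UniformSpace X]

def IsSensitiveWith (T : Type*) [SMul T X] (ε : SetRel X X) : Prop :=
  ∀ x : X, ∀ V ∈ 𝓝 x, ∃ y ∈ V, ∃ t : T, (t • x, t • y) ∉ ε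

theorem IsSensitiveWith.mono [SMul T X] {ε δ : SetRel X X} (h : IsSensitiveWith T ε)
    (hδε : δ ⊆ ε) : IsSensitiveWith T δ := fun x V hV =>
  let ⟨y, hyV, t, ht⟩ := h x V hV
  ⟨y, hyV, t, fun h => ht (hδε h)⟩

def stableSet [SMul T X] (ε : SetRel X X) (F : Set T) (x : X) : Set X :=
  ⋂ t ∈ {t : T | t ∉ F}, {y : X | t • y ∈ closure (ball (t • x) ε)}

theorem exists_mem_uniformity_inv_comp_closure_subset {ε : SetRel X X} (hε : ε ∈ 𝓤 X) :
    ∃ δ ∈ 𝓤 X, δ ⊆ ε ∧ SetRel.inv (closure δ) ○ closure δ ⊆ ε := by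
  obtain ⟨s, hs, _, hsε⟩ := comp_symm_mem_uniformity_sets hε
  obtain ⟨δ, hδ, hδs⟩ := uniformity_hasBasis_closure.mem_iff.mp hs
  refine ⟨δ, hδ, subset_closure.trans <| hδs.trans <|
    (subset_comp_self_of_mem_uniformity hs).trans hsε, ?_⟩
  calc SetRel.inv (closure δ) ○ closure δ ⊆ SetRel.inv s ○ s := by gcongr
    _ = s ○ s := by rw [SetRel.inv_eq_self]
    _ ⊆ ε := hsε

theorem IsCompact.eventually_forall_smul_mem_uniformity [TopologicalSpace T] [SMul T X]
    [ContinuousSMul T X] {K : Set T} (hK : IsCompact K) (z : X) {U : SetRel X X}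
    (hU : U ∈ 𝓤 X) : ∀ᶠ y in 𝓝 z, ∀ t ∈ K, (t • z, t • y) ∈ U := by
  refine hK.eventually_forall_of_forall_eventually fun t _ => ?_
  have hcont : Tendsto (fun p : X × T => (p.2 • z, p.2 • p.1)) (𝓝 (z, t)) (𝓝 (t • z, t • z)) :=
    (by fun_prop : Continuous fun p : X × T => (p.2 • z, p.2 • p.1)).tendsto (z, t)
  exact hcont.eventually (nhds_le_uniformity _ hU)

section StableSet

variable [SMul T X] {ε δ : SetRel X X} {F : Set T} {x y : X}

theorem isClosed_stableSet [ContinuousConstSMul T X] (δ : SetRel X X) (F : Set T) (x : X) :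
    IsClosed (stableSet δ F x) :=
  isClosed_biInter fun t _ => isClosed_closure.preimage (continuous_const_smul t)

theorem mem_closure_of_mem_stableSet (hy : y ∈ stableSet δ F x) {t : T} (ht : t ∉ F) :
    (t • x, t • y) ∈ closure δ :=
  closure_ball_subset (mem_iInter₂.mp hy t ht)

theorem interior_stableSet_eq_empty [TopologicalSpace T] [ContinuousSMul T X]
    (hsens : IsSensitiveWith T ε) (hε : ε ∈ 𝓤 X) (hδ : SetRel.inv (closure δ) ○ closure δ ⊆ ε)
    (hF : IsCompact F) (x : X) : interior (stableSet δ F x) = ∅ := by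
  refine eq_empty_of_forall_notMem fun z hz => ?_
  obtain ⟨y, ⟨hy, hyF⟩, t, ht⟩ := hsens z _ <|
    inter_mem (isOpen_interior.mem_nhds hz) (hF.eventually_forall_smul_mem_uniformity z hε)
  by_cases htF : t ∈ F
  · exact ht (hyF t htF)
  · exact ht (hδ ⟨t • x, mem_closure_of_mem_stableSet (interior_subset hz) htF,
      mem_closure_of_mem_stableSet (interior_subset hy) htF⟩)

end StableSet

end SensitiveSemiflow

theorem sensitive_stable_set_meagre_general
    {T X : Type*} [Monoid T] [TopologicalSpace T]
    [UniformSpace X] [MulAction T X] [ContinuousSMul T X]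
    (hsens : ∃ ε ∈ 𝓤 X, ∀ x : X, ∀ V ∈ 𝓝 x, ∃ y ∈ V, ∃ t : T, (t • x, t • y) ∉ ε) :
    ∃ ε ∈ 𝓤 X,
      (∀ x : X, ∀ V ∈ 𝓝 x, ∃ y ∈ V, ∃ t : T, (t • x, t • y) ∉ ε) ∧
      ∀ F : ℕ → Set T, (∀ n, IsCompact (F n)) → ∀ x : X,
        IsMeagre (⋃ n : ℕ, ⋂ t ∈ {t : T | t ∉ F n},
          {y : X | t • y ∈ closure {w : X | (t • x, w) ∈ ε}}) := by
  obtain ⟨ε, hε, hsens⟩ := hsens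
  obtain ⟨δ, hδ, hδε, hδclosure⟩ := exists_mem_uniformity_inv_comp_closure_subset hε
  refine ⟨δ, hδ, IsSensitiveWith.mono hsens hδε, fun F hF x => ?_⟩
  refine isMeagre_iUnion fun n => IsNowhereDense.isMeagre ?_
  exact (isClosed_stableSet δ (F n) x).isNowhereDense_iff.mpr
    (interior_stableSet_eq_empty hsens hε hδclosure (hF n) x)

/-- For a sensitive topological semiflow on a uniform Baire space there is a sensitivity
index `ε ∈ 𝓤 X` such that for every sequence `(F n)` of compact subsets of `T` and every
`x ∈ X`, the `(ε,(F n))`-stable set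
`⋃ n, ⋂ (t ∉ F n), {y : t • y ∈ closure (ε[t • x])}` is meagre in `X`. -/
theorem sensitive_stable_set_meagre
    {T X : Type*} [Monoid T] [TopologicalSpace T] [ContinuousMul T]
    [UniformSpace X] [BaireSpace X] [MulAction T X] [ContinuousSMul T X]
    (hsens : ∃ ε ∈ 𝓤 X, ∀ x : X, ∀ V ∈ 𝓝 x, ∃ y ∈ V, ∃ t : T, (t • x, t • y) ∉ ε) :
    ∃ ε ∈ 𝓤 X,
      (∀ x : X, ∀ V ∈ 𝓝 x, ∃ y ∈ V, ∃ t : T, (t • x, t • y) ∉ ε) ∧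
      ∀ F : ℕ → Set T, (∀ n, IsCompact (F n)) → ∀ x : X,
        IsMeagre (⋃ n : ℕ, ⋂ t ∈ {t : T | t ∉ F n},
          {y : X | t • y ∈ closure {w : X | (t • x, w) ∈ ε}}) :=
  sensitive_stable_set_meagre_general hsens
end

section
/- Every topologically weakly mixing semiflow on a Hausdorff uniform space with at least two points is sensitive to initial conditions. That is, if (T,X) is a topological semiflow on a Hausdorff uniform space (X,𝓤) with at least two points, and the diagonal action of T on X × X is topologically transitive, then there is an entourage ε ∈ 𝓤 such that for every x ∈ X and every neighborhood V of x there exist y ∈ V and t ∈ T with (t•x, t•y) ∉ ε. -/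
open Filter Topology Set Uniformity

/-!
Two distinct points `a`, `b` are separated by a closed entourage `δ`, so `δᶜ` is a nonempty open
subset of `X × X`. Pick a symmetric entourage `η` with `η ○ η ⊆ δ`. Given `x` and an open `V ∋ x`,
weak mixing moves some pair `(y, z) ∈ V × V` into `δᶜ` at some time `t`; then `t • x` cannot be
`η`-close to both `t • y` and `t • z`, so `η` witnesses sensitivity.
-/

theorem exists_isClosed_entourage_notMem {X : Type*} [UniformSpace X] [T0Space X] {a b : X}
    (hab : a ≠ b) :
    ∃ δ ∈ 𝓤 X, IsClosed δ ∧ (a, b) ∉ δ := by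
  by_contra! h
  exact hab (eq_of_uniformity_basis uniformity_hasBasis_closed fun ⟨hδ, hδc⟩ ↦ h _ hδ hδc)

theorem sensitive_of_forall_isOpen_exists_smul_notMem_s18 {T X : Type*} [SMul T X] [UniformSpace X]
    {δ : Set (X × X)} (hδ : δ ∈ 𝓤 X)
    (hsep : ∀ V : Set X, IsOpen V → V.Nonempty → ∃ t : T, ∃ y ∈ V, ∃ z ∈ V, (t • y, t • z) ∉ δ) :
    ∃ ε ∈ 𝓤 X, ∀ x : X, ∀ V ∈ 𝓝 x, ∃ y ∈ V, ∃ t : T, (t • x, t • y) ∉ ε := by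
  obtain ⟨η, hη, hηsymm, hηδ⟩ := comp_symm_mem_uniformity_sets hδ
  refine ⟨η, hη, fun x V hV ↦ ?_⟩
  obtain ⟨U, hUV, hUopen, hxU⟩ := mem_nhds_iff.1 hV
  obtain ⟨t, y, hy, z, hz, hyz⟩ := hsep U hUopen ⟨x, hxU⟩
  by_contra! hclose
  exact hyz (hηδ (SetRel.prodMk_mem_comp (hηsymm.symm _ _ (hclose y (hUV hy) t))
    (hclose z (hUV hz) t)))

theorem weaklyMixing_implies_sensitive_general
    {T X : Type*} [Monoid T]
    [UniformSpace X] [T2Space X] [MulAction T X]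
    (hnontriv : ∃ a b : X, a ≠ b)
    (hwm : ∀ W₁ W₂ : Set (X × X), IsOpen W₁ → W₁.Nonempty → IsOpen W₂ → W₂.Nonempty →
      ∃ t : T, ∃ w ∈ W₁, (t • w.1, t • w.2) ∈ W₂) :
    ∃ ε ∈ 𝓤 X, ∀ x : X, ∀ V ∈ 𝓝 x, ∃ y ∈ V, ∃ t : T, (t • x, t • y) ∉ ε := by
  obtain ⟨a, b, hab⟩ := hnontriv
  obtain ⟨δ, hδ, hδclosed, habδ⟩ := exists_isClosed_entourage_notMem hab
  refine sensitive_of_forall_isOpen_exists_smul_notMem_s18 (T := T) hδ fun V hV ⟨x, hx⟩ ↦ ?_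
  obtain ⟨t, w, ⟨hw₁, hw₂⟩, hwδ⟩ :=
    hwm (V ×ˢ V) δᶜ (hV.prod hV) ⟨(x, x), hx, hx⟩ hδclosed.isOpen_compl ⟨(a, b), habδ⟩
  exact ⟨t, w.1, hw₁, w.2, hw₂, hwδ⟩

/-- Every topologically weakly mixing semiflow on a Hausdorff uniform space with at
least two points is sensitive to initial conditions. -/
theorem weaklyMixing_implies_sensitive
    {T X : Type*} [Monoid T] [TopologicalSpace T] [ContinuousMul T]
    [UniformSpace X] [T2Space X] [MulAction T X] [ContinuousSMul T X]
    (hnontriv : ∃ a b : X, a ≠ b)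
    (hwm : ∀ W₁ W₂ : Set (X × X), IsOpen W₁ → W₁.Nonempty → IsOpen W₂ → W₂.Nonempty →
      ∃ t : T, ∃ w ∈ W₁, (t • w.1, t • w.2) ∈ W₂) :
    ∃ ε ∈ 𝓤 X, ∀ x : X, ∀ V ∈ 𝓝 x, ∃ y ∈ V, ∃ t : T, (t • x, t • y) ∉ ε :=
  weaklyMixing_implies_sensitive_general hnontriv hwm
end
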